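/- arXiv:cs/0503065 — 6 statements merged into one kernel-verified Lean document; each statement's English description precedes it below -/
import Mathlib

section
/- The category of graphs Gr does not have all pushouts: there exists a span of graphs G₁ ← G₀ → G₂ that admits no pushout. Concretely, if G₀ has a single unlabeled node, G₁ a single node labeled a₁, and G₂ a single node labeled a₂ with a₁ ≠ a₂ constants (arity 0), then the span of the unique homomorphisms from G₀ has no cocone, hence no pushout. -/
open CategoryTheory

/-- A graph over a signature `Ω` with arity function `ar`: nodes, an (implicit) subset of
labeled nodes (those where `label` is `some`), and a successor function assigning to each
labeled node a string of nodes whose length is the arity of its label. Unlabeled nodes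
have no successors. -/
structure SigGraph (Ω : Type) (ar : Ω → ℕ) where
  N : Type
  label : N → Option Ω
  succ : N → List N
  hlen : ∀ n f, label n = some f → (succ n).length = ar f
  hnone : ∀ n, label n = none → succ n = []

namespace SigGraph

variable {Ω : Type} {ar : Ω → ℕ}

/-- A graph homomorphism: a map on nodes preserving labeledness, labels and successors. -/
@[ext]
structure Hom (G H : SigGraph Ω ar) where
  toFun : G.N → H.N
  map_label : ∀ n f, G.label n = some f → H.label (toFun n) = some f
  map_succ : ∀ n f, G.label n = some f → H.succ (toFun n) = (G.succ n).map toFun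

def Hom.id (G : SigGraph Ω ar) : Hom G G :=
  ⟨fun n => n, fun _ _ h => h, fun n _ _ => by simp⟩

def Hom.comp {G H K : SigGraph Ω ar} (φ : Hom G H) (ψ : Hom H K) : Hom G K where
  toFun := fun n => ψ.toFun (φ.toFun n)
  map_label := fun n f h => ψ.map_label _ f (φ.map_label n f h)
  map_succ := fun n f h => by
    rw [ψ.map_succ _ f (φ.map_label n f h), φ.map_succ n f h, List.map_map]; rfl

instance : Category (SigGraph Ω ar) where
  Hom := Hom
  id := Hom.id
  comp := Hom.comp
  id_comp := by intros; rfl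
  comp_id := by intros; rfl
  assoc := by intros; rfl

/-- An edge of a graph: a labeled node together with a position among its successors. -/
def Edge (G : SigGraph Ω ar) := Σ n : G.N, Fin (G.succ n).length

lemma Edge.label_isSome {G : SigGraph Ω ar} (e : G.Edge) : (G.label e.1).isSome := by
  have h2 : 0 < (G.succ e.1).length := Nat.lt_of_le_of_lt (Nat.zero_le _) e.2.isLt
  cases hl : G.label e.1 with
  | none => rw [G.hnone e.1 hl] at h2; simp at h2
  | some f => rfl

/-- The image of an edge under a homomorphism. -/
def Hom.edgeMap {G H : SigGraph Ω ar} (φ : Hom G H) (e : G.Edge) : H.Edge :=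
  ⟨φ.toFun e.1, ⟨e.2, by
    obtain ⟨f, hf⟩ := Option.isSome_iff_exists.mp e.label_isSome
    rw [φ.map_succ e.1 f hf, List.length_map]; exact e.2.isLt⟩⟩

open Classical in
/-- The disconnected graph `D(G,E)`: nodes of `G` plus a fresh unlabeled node `n[i]`
for each edge `(n,i) ∈ E`, with each edge of `E` redirected to its fresh node. -/
noncomputable def D (G : SigGraph Ω ar) (E : Set G.Edge) : SigGraph Ω ar where
  N := G.N ⊕ {e : G.Edge // e ∈ E}
  label := Sum.elim G.label fun _ => none
  succ := Sum.elim
    (fun n => List.ofFn fun i : Fin (G.succ n).length =>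
      if h : (⟨n, i⟩ : G.Edge) ∈ E then Sum.inr ⟨⟨n, i⟩, h⟩ else Sum.inl ((G.succ n).get i))
    (fun _ => [])
  hlen := by
    rintro (n | e) f h
    · simpa using G.hlen n f h
    · simp at h
  hnone := by
    rintro (n | e) h
    · simp only [Sum.elim_inl] at h ⊢
      simp [List.ofFn_eq_nil_iff, G.hnone n h]
    · rfl

/-- The connection homomorphism `δ_{G,E} : D(G,E) → G`. -/
noncomputable def delta (G : SigGraph Ω ar) (E : Set G.Edge) : Hom (G.D E) G where
  toFun := Sum.elim (fun n => n) (fun e => (G.succ e.1.1).get e.1.2)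
  map_label := by
    rintro (n | e) f h
    · exact h
    · simp [D] at h
  map_succ := by
    rintro (n | e) f h
    · simp only [D, Sum.elim_inl, List.map_ofFn]
      apply List.ext_getElem
      · simp
      · intro i h1 h2
        simp only [List.getElem_ofFn, Function.comp_apply]
        split <;> simp [List.get_eq_getElem]
    · simp [D] at h
end SigGraph
namespace SigGraph
variable {Ω : Type} {ar : Ω → ℕ}

/-- The underlying node map of the disconnected homomorphism `D_{φ,E}`. -/
def dmapFun {G H : SigGraph Ω ar} (φ : Hom G H) (E : Set G.Edge) :
    (G.D E).N → (H.D (φ.edgeMap '' E)).N :=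
  Sum.elim (fun n => Sum.inl (φ.toFun n))
    (fun e => Sum.inr ⟨φ.edgeMap e.1, Set.mem_image_of_mem _ e.2⟩)

/-- `μ` is `Ω`-injective if it is injective on labeled nodes. -/
def OmegaInjective {G H : SigGraph Ω ar} (μ : Hom G H) : Prop :=
  ∀ n n', (G.label n).isSome → (G.label n').isSome → μ.toFun n = μ.toFun n' → n = n'

/-- The conditions on the right leg `ρ : D(L,E) → R` of an LRR-rewrite rule:
unlabeled nodes of `L` are mapped to unlabeled nodes of `R`, injectively. -/
def IsLRRRule {L R : SigGraph Ω ar} (E : Set L.Edge) (ρ : Hom (L.D E) R) : Prop :=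
  (∀ n : L.N, L.label n = none → R.label (ρ.toFun (Sum.inl n)) = none) ∧
  (∀ n n' : L.N, L.label n = none → L.label n' = none →
      ρ.toFun (Sum.inl n) = ρ.toFun (Sum.inl n') → n = n')

section Span
variable {G₀ G₁ G₂ : SigGraph Ω ar}

/-- The relation on `N₁ + N₂` generated by a span: `φ₁(n₀) ∼ φ₂(n₀)`. -/
def spanRel (φ₁ : Hom G₀ G₁) (φ₂ : Hom G₀ G₂) : (G₁.N ⊕ G₂.N) → (G₁.N ⊕ G₂.N) → Prop :=
  fun x y => ∃ n₀, x = Sum.inl (φ₁.toFun n₀) ∧ y = Sum.inr (φ₂.toFun n₀)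

/-- Label of a node of the disjoint union. -/
def nodeLabel (G₁ G₂ : SigGraph Ω ar) : (G₁.N ⊕ G₂.N) → Option Ω :=
  Sum.elim G₁.label G₂.label

/-- Successors of a node of the disjoint union. -/
def nodeSucc (G₁ G₂ : SigGraph Ω ar) : (G₁.N ⊕ G₂.N) → List (G₁.N ⊕ G₂.N) :=
  Sum.elim (fun n => (G₁.succ n).map Sum.inl) (fun n => (G₂.succ n).map Sum.inr)

/-- A span of graphs is strongly labeled if in each equivalence class all labeled
nodes share the same label and have pairwise equivalent successors. -/
def StronglyLabeled (φ₁ : Hom G₀ G₁) (φ₂ : Hom G₀ G₂) : Prop :=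
  ∀ x y, Relation.EqvGen (spanRel φ₁ φ₂) x y →
    ∀ f g, nodeLabel G₁ G₂ x = some f → nodeLabel G₁ G₂ y = some g →
      f = g ∧ List.Forall₂ (Relation.EqvGen (spanRel φ₁ φ₂)) (nodeSucc G₁ G₂ x) (nodeSucc G₁ G₂ y)

open Classical in
/-- The candidate pushout graph of a span: nodes are the quotient of `N₁ + N₂`,
labeled classes are those containing a labeled node, labels and successors are
taken from a (chosen) labeled representative. -/
noncomputable def pushoutGraph (φ₁ : Hom G₀ G₁) (φ₂ : Hom G₀ G₂) : SigGraph Ω ar where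
  N := Quot (spanRel φ₁ φ₂)
  label := fun c =>
    if h : ∃ x, Quot.mk _ x = c ∧ (nodeLabel G₁ G₂ x).isSome
    then nodeLabel G₁ G₂ h.choose else none
  succ := fun c =>
    if h : ∃ x, Quot.mk _ x = c ∧ (nodeLabel G₁ G₂ x).isSome
    then (nodeSucc G₁ G₂ h.choose).map (Quot.mk _) else []
  hlen := by
    intro c f h
    by_cases hx : ∃ x, Quot.mk _ x = c ∧ (nodeLabel G₁ G₂ x).isSome
    · rw [dif_pos hx] at h ⊢
      rw [List.length_map]
      rcases hc : hx.choose with n | n <;> rw [hc] at h <;>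
        simp only [nodeLabel, nodeSucc, Sum.elim_inl, Sum.elim_inr] at h ⊢ <;>
        rw [List.length_map]
      · exact G₁.hlen n f h
      · exact G₂.hlen n f h
    · rw [dif_neg hx] at h; simp at h
  hnone := by
    intro c h
    by_cases hx : ∃ x, Quot.mk _ x = c ∧ (nodeLabel G₁ G₂ x).isSome
    · rw [dif_pos hx] at h
      have := hx.choose_spec.2
      rw [h] at this; simp at this
    · rw [dif_neg hx]

end Span

open Classical in
/-- The disconnected graph `D̄(G,o)`: `G` plus a fresh unlabeled node `mr`, with
all edges targeting `o` redirected to `mr`. -/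
noncomputable def Dbar (G : SigGraph Ω ar) (o : G.N) : SigGraph Ω ar where
  N := G.N ⊕ Unit
  label := Sum.elim G.label fun _ => none
  succ := Sum.elim
    (fun n => (G.succ n).map fun t => if t = o then Sum.inr () else Sum.inl t)
    (fun _ => [])
  hlen := by
    rintro (n | u) f h
    · simp only [Sum.elim_inl] at h ⊢
      rw [List.length_map]; exact G.hlen n f h
    · simp at h
  hnone := by
    rintro (n | u) h
    · simp only [Sum.elim_inl] at h ⊢
      rw [G.hnone n h]; rfl
    · rfl

open Classical in
/-- The homomorphism `δ_μ : D̄(G,o) → G`, identity on `N_G`, sending `mr` to `o`. -/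
noncomputable def deltaBar (G : SigGraph Ω ar) (o : G.N) : Hom (G.Dbar o) G where
  toFun := Sum.elim (fun n => n) fun _ => o
  map_label := by
    rintro (n | u) f h
    · exact h
    · simp [Dbar] at h
  map_succ := by
    rintro (n | u) f h
    · simp only [Dbar, Sum.elim_inl, List.map_map]
      symm
      refine (List.map_congr_left ?_).trans (List.map_id _)
      intro t ht
      by_cases h' : t = o <;> simp [h']
    · simp [Dbar] at h

open Classical in
/-- The graph obtained from `U` by redirecting all edges targeting `a` towards `b`. -/
noncomputable def redirect (U : SigGraph Ω ar) (a b : U.N) : SigGraph Ω ar where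
  N := U.N
  label := U.label
  succ := fun n => (U.succ n).map fun t => if t = a then b else t
  hlen := by intro n f h; rw [List.length_map]; exact U.hlen n f h
  hnone := by intro n h; rw [U.hnone n h]; rfl

/-- The graph `P` with two unlabeled nodes: `false` is `ar`, `true` is `pr`. -/
def P (Ω : Type) (ar : Ω → ℕ) : SigGraph Ω ar :=
  ⟨Bool, fun _ => none, fun _ => [], fun _ _ h => by simp at h, fun _ _ => rfl⟩

/-- The switch graph `SW` with three unlabeled nodes: `some false` is `ar`,
`some true` is `pr`, `none` is `mr`. -/
def SW (Ω : Type) (ar : Ω → ℕ) : SigGraph Ω ar :=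
  ⟨Option Bool, fun _ => none, fun _ => [], fun _ _ h => by simp at h, fun _ _ => rfl⟩

/-- `λ : SW → P`, sending `ar, mr ↦ ar` and `pr ↦ pr`. -/
def lamGR : Hom (SW Ω ar) (P Ω ar) :=
  ⟨fun x => x.getD false, fun _ _ h => by simp [SW] at h, fun _ _ h => by simp [SW] at h⟩

/-- `ρ : SW → P`, sending `ar ↦ ar` and `pr, mr ↦ pr`. -/
def rhoGR : Hom (SW Ω ar) (P Ω ar) :=
  ⟨fun x => x.getD true, fun _ _ h => by simp [SW] at h, fun _ _ h => by simp [SW] at h⟩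

/-- `D̄_μ : SW → D̄(U, μ(ar))`. -/
noncomputable def dbarMu {U : SigGraph Ω ar} (μ : Hom (P Ω ar) U) :
    Hom (SW Ω ar) (U.Dbar (μ.toFun false)) where
  toFun := fun x => match x with
    | some b => Sum.inl (μ.toFun b)
    | none => Sum.inr ()
  map_label := fun _ _ h => by simp [SW] at h
  map_succ := fun _ _ h => by simp [SW] at h

/-- A graph with a single unlabeled node. -/
def oneUnlabeled (Ω : Type) (ar : Ω → ℕ) : SigGraph Ω ar :=
  ⟨PUnit, fun _ => none, fun _ => [], fun _ _ h => by simp at h, fun _ _ => rfl⟩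

/-- A graph with a single node labeled `a` (looping on itself `ar a` times). -/
def singleLabeled (a : Ω) : SigGraph Ω ar :=
  ⟨PUnit, fun _ => some a, fun _ => List.replicate (ar a) PUnit.unit,
   fun _ f h => by cases h; simp, fun _ h => by simp at h⟩

/-- The unique homomorphism from the one-point unlabeled graph to `singleLabeled a`. -/
def toSingle (a : Ω) : Hom (oneUnlabeled Ω ar) (singleLabeled a) :=
  ⟨fun _ => PUnit.unit, fun _ _ h => by simp [oneUnlabeled] at h,
   fun _ _ h => by simp [oneUnlabeled] at h⟩

end SigGraph

namespace SigGraph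

variable {Ω : Type} {ar : Ω → ℕ}

theorem label_eq_of_comp_eq {G₀ G₁ G₂ V : SigGraph Ω ar} {φ₁ : Hom G₀ G₁} {φ₂ : Hom G₀ G₂}
    {i₁ : Hom G₁ V} {i₂ : Hom G₂ V} (hcomm : φ₁.comp i₁ = φ₂.comp i₂) (n₀ : G₀.N) {f₁ f₂ : Ω}
    (hf₁ : G₁.label (φ₁.toFun n₀) = some f₁) (hf₂ : G₂.label (φ₂.toFun n₀) = some f₂) :
    f₁ = f₂ := by
  have hsame : i₁.toFun (φ₁.toFun n₀) = i₂.toFun (φ₂.toFun n₀) :=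
    congrArg (fun ψ => Hom.toFun ψ n₀) hcomm
  have hlabel₁ := i₁.map_label _ f₁ hf₁
  rw [hsame, i₂.map_label _ f₂ hf₂] at hlabel₁
  exact (Option.some.inj hlabel₁).symm

theorem toSingle_comp_ne {a₁ a₂ : Ω} (hne : a₁ ≠ a₂) {V : SigGraph Ω ar}
    (i₁ : Hom (singleLabeled a₁) V) (i₂ : Hom (singleLabeled a₂) V) :
    (toSingle a₁).comp i₁ ≠ (toSingle a₂).comp i₂ :=
  fun hcomm => hne (label_eq_of_comp_eq hcomm PUnit.unit rfl rfl)

end SigGraph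

theorem no_pushout_distinct_constants_general {Ω : Type} {ar : Ω → ℕ} (a₁ a₂ : Ω)
    (hne : a₁ ≠ a₂) :
    (¬ ∃ (V : SigGraph Ω ar) (i₁ : SigGraph.Hom (SigGraph.singleLabeled (ar := ar) a₁) V)
        (i₂ : SigGraph.Hom (SigGraph.singleLabeled (ar := ar) a₂) V),
        (SigGraph.toSingle a₁).comp i₁ = (SigGraph.toSingle a₂).comp i₂) ∧
    (¬ ∃ (V : SigGraph Ω ar) (i₁ : SigGraph.Hom (SigGraph.singleLabeled (ar := ar) a₁) V)
        (i₂ : SigGraph.Hom (SigGraph.singleLabeled (ar := ar) a₂) V),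
        IsPushout (C := SigGraph Ω ar) (SigGraph.toSingle a₁) (SigGraph.toSingle a₂) i₁ i₂) :=
  ⟨fun ⟨_, i₁, i₂, hcomm⟩ => SigGraph.toSingle_comp_ne hne i₁ i₂ hcomm,
   fun ⟨_, i₁, i₂, hpush⟩ => SigGraph.toSingle_comp_ne hne i₁ i₂ hpush.w⟩

/-- The category of graphs does not have all pushouts: the span of
the unique homomorphisms from a single unlabeled node to one-node graphs labeled by
distinct constants `a₁ ≠ a₂` admits no cocone (no commutative square), hence no pushout. -/
theorem no_pushout_distinct_constants {Ω : Type} {ar : Ω → ℕ} (a₁ a₂ : Ω)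
    (hne : a₁ ≠ a₂) (h₁ : ar a₁ = 0) (h₂ : ar a₂ = 0) :
    (¬ ∃ (V : SigGraph Ω ar) (i₁ : SigGraph.Hom (SigGraph.singleLabeled (ar := ar) a₁) V)
        (i₂ : SigGraph.Hom (SigGraph.singleLabeled (ar := ar) a₂) V),
        (SigGraph.toSingle a₁).comp i₁ = (SigGraph.toSingle a₂).comp i₂) ∧
    (¬ ∃ (V : SigGraph Ω ar) (i₁ : SigGraph.Hom (SigGraph.singleLabeled (ar := ar) a₁) V)
        (i₂ : SigGraph.Hom (SigGraph.singleLabeled (ar := ar) a₂) V),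
        IsPushout (C := SigGraph Ω ar) (SigGraph.toSingle a₁) (SigGraph.toSingle a₂) i₁ i₂) :=
  no_pushout_distinct_constants_general a₁ a₂ hne
end

section
/- Every strongly labeled span of graphs G₁ ← G₀ → G₂ has a pushout G₃ in the category of graphs, constructed as follows: N₃ = (N₁ + N₂)/∼ where ∼ is generated by φ₁(n₀) ∼ φ₂(n₀) for n₀ ∈ N₀; the labeled nodes of G₃ are the classes containing at least one labeled node; the label of such a class is the common label of its labeled members; and the successors of such a class are the classes of the successors of any labeled node in it. -/
open CategoryTheory

/-- A graph over a signature `Ω` with arity function `ar`: nodes, an (implicit) subset of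
labeled nodes (those where `label` is `some`), and a successor function assigning to each
labeled node a string of nodes whose length is the arity of its label. Unlabeled nodes
have no successors. -/
structure OGraph (Ω : Type) (ar : Ω → ℕ) where
  N : Type
  label : N → Option Ω
  succ : N → List N
  hlen : ∀ n f, label n = some f → (succ n).length = ar f
  hnone : ∀ n, label n = none → succ n = []

namespace OGraph

variable {Ω : Type} {ar : Ω → ℕ}

/-- A graph homomorphism: a map on nodes preserving labeledness, labels and successors. -/
@[ext]
structure Hom (G H : OGraph Ω ar) where
  toFun : G.N → H.N
  map_label : ∀ n f, G.label n = some f → H.label (toFun n) = some f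
  map_succ : ∀ n f, G.label n = some f → H.succ (toFun n) = (G.succ n).map toFun

def Hom.id (G : OGraph Ω ar) : Hom G G :=
  ⟨fun n => n, fun _ _ h => h, fun n _ _ => by simp⟩

def Hom.comp {G H K : OGraph Ω ar} (φ : Hom G H) (ψ : Hom H K) : Hom G K where
  toFun := fun n => ψ.toFun (φ.toFun n)
  map_label := fun n f h => ψ.map_label _ f (φ.map_label n f h)
  map_succ := fun n f h => by
    rw [ψ.map_succ _ f (φ.map_label n f h), φ.map_succ n f h, List.map_map]; rfl

instance : Category (OGraph Ω ar) where
  Hom := Hom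
  id := Hom.id
  comp := Hom.comp
  id_comp := by intros; rfl
  comp_id := by intros; rfl
  assoc := by intros; rfl

/-- An edge of a graph: a labeled node together with a position among its successors. -/
def Edge (G : OGraph Ω ar) := Σ n : G.N, Fin (G.succ n).length

lemma Edge.label_isSome {G : OGraph Ω ar} (e : G.Edge) : (G.label e.1).isSome := by
  have h2 : 0 < (G.succ e.1).length := Nat.lt_of_le_of_lt (Nat.zero_le _) e.2.isLt
  cases hl : G.label e.1 with
  | none => rw [G.hnone e.1 hl] at h2; simp at h2
  | some f => rfl

/-- The image of an edge under a homomorphism. -/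
def Hom.edgeMap {G H : OGraph Ω ar} (φ : Hom G H) (e : G.Edge) : H.Edge :=
  ⟨φ.toFun e.1, ⟨e.2, by
    obtain ⟨f, hf⟩ := Option.isSome_iff_exists.mp e.label_isSome
    rw [φ.map_succ e.1 f hf, List.length_map]; exact e.2.isLt⟩⟩

open Classical in
/-- The disconnected graph `D(G,E)`: nodes of `G` plus a fresh unlabeled node `n[i]`
for each edge `(n,i) ∈ E`, with each edge of `E` redirected to its fresh node. -/
noncomputable def D (G : OGraph Ω ar) (E : Set G.Edge) : OGraph Ω ar where
  N := G.N ⊕ {e : G.Edge // e ∈ E}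
  label := Sum.elim G.label fun _ => none
  succ := Sum.elim
    (fun n => List.ofFn fun i : Fin (G.succ n).length =>
      if h : (⟨n, i⟩ : G.Edge) ∈ E then Sum.inr ⟨⟨n, i⟩, h⟩ else Sum.inl ((G.succ n).get i))
    (fun _ => [])
  hlen := by
    rintro (n | e) f h
    · simpa using G.hlen n f h
    · simp at h
  hnone := by
    rintro (n | e) h
    · simp only [Sum.elim_inl] at h ⊢
      simp [List.ofFn_eq_nil_iff, G.hnone n h]
    · rfl

/-- The connection homomorphism `δ_{G,E} : D(G,E) → G`. -/
noncomputable def delta (G : OGraph Ω ar) (E : Set G.Edge) : Hom (G.D E) G where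
  toFun := Sum.elim (fun n => n) (fun e => (G.succ e.1.1).get e.1.2)
  map_label := by
    rintro (n | e) f h
    · exact h
    · simp [D] at h
  map_succ := by
    rintro (n | e) f h
    · simp only [D, Sum.elim_inl, List.map_ofFn]
      apply List.ext_getElem
      · simp
      · intro i h1 h2
        simp only [List.getElem_ofFn, Function.comp_apply]
        split <;> simp [List.get_eq_getElem]
    · simp [D] at h
end OGraph
namespace OGraph
variable {Ω : Type} {ar : Ω → ℕ}

/-- The underlying node map of the disconnected homomorphism `D_{φ,E}`. -/
def dmapFun {G H : OGraph Ω ar} (φ : Hom G H) (E : Set G.Edge) :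
    (G.D E).N → (H.D (φ.edgeMap '' E)).N :=
  Sum.elim (fun n => Sum.inl (φ.toFun n))
    (fun e => Sum.inr ⟨φ.edgeMap e.1, Set.mem_image_of_mem _ e.2⟩)

/-- `μ` is `Ω`-injective if it is injective on labeled nodes. -/
def OmegaInjective {G H : OGraph Ω ar} (μ : Hom G H) : Prop :=
  ∀ n n', (G.label n).isSome → (G.label n').isSome → μ.toFun n = μ.toFun n' → n = n'

/-- The conditions on the right leg `ρ : D(L,E) → R` of an LRR-rewrite rule:
unlabeled nodes of `L` are mapped to unlabeled nodes of `R`, injectively. -/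
def IsLRRRule {L R : OGraph Ω ar} (E : Set L.Edge) (ρ : Hom (L.D E) R) : Prop :=
  (∀ n : L.N, L.label n = none → R.label (ρ.toFun (Sum.inl n)) = none) ∧
  (∀ n n' : L.N, L.label n = none → L.label n' = none →
      ρ.toFun (Sum.inl n) = ρ.toFun (Sum.inl n') → n = n')

section Span
variable {G₀ G₁ G₂ : OGraph Ω ar}

/-- The relation on `N₁ + N₂` generated by a span: `φ₁(n₀) ∼ φ₂(n₀)`. -/
def spanRel (φ₁ : Hom G₀ G₁) (φ₂ : Hom G₀ G₂) : (G₁.N ⊕ G₂.N) → (G₁.N ⊕ G₂.N) → Prop :=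
  fun x y => ∃ n₀, x = Sum.inl (φ₁.toFun n₀) ∧ y = Sum.inr (φ₂.toFun n₀)

/-- Label of a node of the disjoint union. -/
def nodeLabel (G₁ G₂ : OGraph Ω ar) : (G₁.N ⊕ G₂.N) → Option Ω :=
  Sum.elim G₁.label G₂.label

/-- Successors of a node of the disjoint union. -/
def nodeSucc (G₁ G₂ : OGraph Ω ar) : (G₁.N ⊕ G₂.N) → List (G₁.N ⊕ G₂.N) :=
  Sum.elim (fun n => (G₁.succ n).map Sum.inl) (fun n => (G₂.succ n).map Sum.inr)

/-- A span of graphs is strongly labeled if in each equivalence class all labeled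
nodes share the same label and have pairwise equivalent successors. -/
def StronglyLabeled (φ₁ : Hom G₀ G₁) (φ₂ : Hom G₀ G₂) : Prop :=
  ∀ x y, Relation.EqvGen (spanRel φ₁ φ₂) x y →
    ∀ f g, nodeLabel G₁ G₂ x = some f → nodeLabel G₁ G₂ y = some g →
      f = g ∧ List.Forall₂ (Relation.EqvGen (spanRel φ₁ φ₂)) (nodeSucc G₁ G₂ x) (nodeSucc G₁ G₂ y)

open Classical in
/-- The candidate pushout graph of a span: nodes are the quotient of `N₁ + N₂`,
labeled classes are those containing a labeled node, labels and successors are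
taken from a (chosen) labeled representative. -/
noncomputable def pushoutGraph (φ₁ : Hom G₀ G₁) (φ₂ : Hom G₀ G₂) : OGraph Ω ar where
  N := Quot (spanRel φ₁ φ₂)
  label := fun c =>
    if h : ∃ x, Quot.mk _ x = c ∧ (nodeLabel G₁ G₂ x).isSome
    then nodeLabel G₁ G₂ h.choose else none
  succ := fun c =>
    if h : ∃ x, Quot.mk _ x = c ∧ (nodeLabel G₁ G₂ x).isSome
    then (nodeSucc G₁ G₂ h.choose).map (Quot.mk _) else []
  hlen := by
    intro c f h
    try dsimp only at h ⊢
    by_cases hx : ∃ x, Quot.mk _ x = c ∧ (nodeLabel G₁ G₂ x).isSome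
    · rw [dif_pos hx] at h ⊢
      rw [List.length_map]
      rcases hc : hx.choose with n | n <;> rw [hc] at h <;>
        simp only [nodeLabel, nodeSucc, Sum.elim_inl, Sum.elim_inr] at h ⊢ <;>
        rw [List.length_map]
      · exact G₁.hlen n f h
      · exact G₂.hlen n f h
    · rw [dif_neg hx] at h; simp at h
  hnone := by
    intro c h
    try dsimp only at h ⊢
    by_cases hx : ∃ x, Quot.mk _ x = c ∧ (nodeLabel G₁ G₂ x).isSome
    · rw [dif_pos hx] at h
      have := hx.choose_spec.2
      rw [h] at this; simp at this
    · rw [dif_neg hx]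

end Span

open Classical in
/-- The disconnected graph `D̄(G,o)`: `G` plus a fresh unlabeled node `mr`, with
all edges targeting `o` redirected to `mr`. -/
noncomputable def Dbar (G : OGraph Ω ar) (o : G.N) : OGraph Ω ar where
  N := G.N ⊕ Unit
  label := Sum.elim G.label fun _ => none
  succ := Sum.elim
    (fun n => (G.succ n).map fun t => if t = o then Sum.inr () else Sum.inl t)
    (fun _ => [])
  hlen := by
    rintro (n | u) f h
    · simp only [Sum.elim_inl] at h ⊢
      rw [List.length_map]; exact G.hlen n f h
    · simp at h
  hnone := by
    rintro (n | u) h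
    · simp only [Sum.elim_inl] at h ⊢
      rw [G.hnone n h]; rfl
    · rfl

open Classical in
/-- The homomorphism `δ_μ : D̄(G,o) → G`, identity on `N_G`, sending `mr` to `o`. -/
noncomputable def deltaBar (G : OGraph Ω ar) (o : G.N) : Hom (G.Dbar o) G where
  toFun := Sum.elim (fun n => n) fun _ => o
  map_label := by
    rintro (n | u) f h
    · exact h
    · simp [Dbar] at h
  map_succ := by
    rintro (n | u) f h
    · simp only [Dbar, Sum.elim_inl, List.map_map]
      symm
      refine (List.map_congr_left ?_).trans (List.map_id _)
      intro t ht
      by_cases h' : t = o <;> simp [h']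
    · simp [Dbar] at h

open Classical in
/-- The graph obtained from `U` by redirecting all edges targeting `a` towards `b`. -/
noncomputable def redirect (U : OGraph Ω ar) (a b : U.N) : OGraph Ω ar where
  N := U.N
  label := U.label
  succ := fun n => (U.succ n).map fun t => if t = a then b else t
  hlen := by intro n f h; (try dsimp only); rw [List.length_map]; exact U.hlen n f h
  hnone := by intro n h; (try dsimp only); rw [U.hnone n h]; rfl

/-- The graph `P` with two unlabeled nodes: `false` is `ar`, `true` is `pr`. -/
def P (Ω : Type) (ar : Ω → ℕ) : OGraph Ω ar :=
  ⟨Bool, fun _ => none, fun _ => [], fun _ _ h => by simp at h, fun _ _ => rfl⟩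

/-- The switch graph `SW` with three unlabeled nodes: `some false` is `ar`,
`some true` is `pr`, `none` is `mr`. -/
def SW (Ω : Type) (ar : Ω → ℕ) : OGraph Ω ar :=
  ⟨Option Bool, fun _ => none, fun _ => [], fun _ _ h => by simp at h, fun _ _ => rfl⟩

/-- `λ : SW → P`, sending `ar, mr ↦ ar` and `pr ↦ pr`. -/
def lamGR : Hom (SW Ω ar) (P Ω ar) :=
  ⟨fun x => x.getD false, fun _ _ h => by simp [SW] at h, fun _ _ h => by simp [SW] at h⟩

/-- `ρ : SW → P`, sending `ar ↦ ar` and `pr, mr ↦ pr`. -/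
def rhoGR : Hom (SW Ω ar) (P Ω ar) :=
  ⟨fun x => x.getD true, fun _ _ h => by simp [SW] at h, fun _ _ h => by simp [SW] at h⟩

/-- `D̄_μ : SW → D̄(U, μ(ar))`. -/
noncomputable def dbarMu {U : OGraph Ω ar} (μ : Hom (P Ω ar) U) :
    Hom (SW Ω ar) (U.Dbar (μ.toFun false)) where
  toFun := fun x => match x with
    | some b => Sum.inl (μ.toFun b)
    | none => Sum.inr ()
  map_label := fun _ _ h => by simp [SW] at h
  map_succ := fun _ _ h => by simp [SW] at h

/-- A graph with a single unlabeled node. -/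
def oneUnlabeled (Ω : Type) (ar : Ω → ℕ) : OGraph Ω ar :=
  ⟨PUnit, fun _ => none, fun _ => [], fun _ _ h => by simp at h, fun _ _ => rfl⟩

/-- A graph with a single node labeled `a` (looping on itself `ar a` times). -/
def singleLabeled (a : Ω) : OGraph Ω ar :=
  ⟨PUnit, fun _ => some a, fun _ => List.replicate (ar a) PUnit.unit,
   fun _ f h => by cases h; simp, fun _ h => by simp at h⟩

/-- The unique homomorphism from the one-point unlabeled graph to `singleLabeled a`. -/
def toSingle (a : Ω) : Hom (oneUnlabeled Ω ar) (singleLabeled a) :=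
  ⟨fun _ => PUnit.unit, fun _ _ h => by simp [oneUnlabeled] at h,
   fun _ _ h => by simp [oneUnlabeled] at h⟩

end OGraph

/-
Strong labeling makes the label and successors of a class independent of the labeled
representative chosen by `pushoutGraph`, so the quotient maps are homomorphisms. A cocone
`G₁ → W ← G₂` descends to the quotient, and the induced map preserves labels and successors
because every labeled class has a labeled representative in `N₁ + N₂`.
-/

namespace OGraph

variable {Ω : Type} {ar : Ω → ℕ} {G₀ G₁ G₂ : OGraph Ω ar}

section Copairing

variable {W : OGraph Ω ar} (f : Hom G₁ W) (g : Hom G₂ W)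

lemma label_elim_of_nodeLabel_eq_some {x : G₁.N ⊕ G₂.N} {a : Ω}
    (hx : nodeLabel G₁ G₂ x = some a) : W.label (Sum.elim f.toFun g.toFun x) = some a := by
  cases x with
  | inl n => exact f.map_label n a hx
  | inr n => exact g.map_label n a hx

lemma succ_elim_of_nodeLabel_eq_some {x : G₁.N ⊕ G₂.N} {a : Ω}
    (hx : nodeLabel G₁ G₂ x = some a) :
    W.succ (Sum.elim f.toFun g.toFun x) = (nodeSucc G₁ G₂ x).map (Sum.elim f.toFun g.toFun) := by
  cases x with
  | inl n => simp [nodeSucc, f.map_succ n a hx, List.map_map, Function.comp_def]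
  | inr n => simp [nodeSucc, g.map_succ n a hx, List.map_map, Function.comp_def]

end Copairing

section Pushout

variable (φ₁ : Hom G₀ G₁) (φ₂ : Hom G₀ G₂)

lemma map_mk_eq_of_forall₂_eqvGen {l₁ l₂ : List (G₁.N ⊕ G₂.N)}
    (h : List.Forall₂ (Relation.EqvGen (spanRel φ₁ φ₂)) l₁ l₂) :
    l₁.map (Quot.mk (spanRel φ₁ φ₂)) = l₂.map (Quot.mk (spanRel φ₁ φ₂)) := by
  induction h with
  | nil => rfl
  | cons h _ ih => simp only [List.map_cons, ih, Quot.eqvGen_sound h]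

lemma exists_rep_of_pushoutGraph_label_eq_some {c : (pushoutGraph φ₁ φ₂).N} {a : Ω}
    (h : (pushoutGraph φ₁ φ₂).label c = some a) :
    ∃ x, Quot.mk (spanRel φ₁ φ₂) x = c ∧ nodeLabel G₁ G₂ x = some a ∧
      (pushoutGraph φ₁ φ₂).succ c = (nodeSucc G₁ G₂ x).map (Quot.mk (spanRel φ₁ φ₂)) := by
  classical
  simp only [pushoutGraph] at h ⊢
  split_ifs at h ⊢ with hex
  exact ⟨hex.choose, hex.choose_spec.1, h, rfl⟩

variable {φ₁ φ₂}

lemma StronglyLabeled.pushoutGraph_label_and_succ_mk (hSL : StronglyLabeled φ₁ φ₂)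
    {x : G₁.N ⊕ G₂.N} {a : Ω} (hx : nodeLabel G₁ G₂ x = some a) :
    (pushoutGraph φ₁ φ₂).label (Quot.mk _ x) = some a ∧
      (pushoutGraph φ₁ φ₂).succ (Quot.mk _ x) =
        (nodeSucc G₁ G₂ x).map (Quot.mk (spanRel φ₁ φ₂)) := by
  classical
  have hex : ∃ y, Quot.mk (spanRel φ₁ φ₂) y = Quot.mk _ x ∧ (nodeLabel G₁ G₂ y).isSome :=
    ⟨x, rfl, by simp [hx]⟩
  obtain ⟨b, hb⟩ := Option.isSome_iff_exists.mp hex.choose_spec.2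
  obtain ⟨rfl, hsucc⟩ := hSL _ _ (Quot.eq.mp hex.choose_spec.1) b a hb hx
  simp only [pushoutGraph, dif_pos hex]
  exact ⟨hb, map_mk_eq_of_forall₂_eqvGen φ₁ φ₂ hsucc⟩

variable (hSL : StronglyLabeled φ₁ φ₂)

noncomputable def StronglyLabeled.inl : G₁ ⟶ pushoutGraph φ₁ φ₂ where
  toFun n := Quot.mk _ (Sum.inl n)
  map_label n a h := (hSL.pushoutGraph_label_and_succ_mk (x := Sum.inl n) h).1
  map_succ n a h := by
    rw [(hSL.pushoutGraph_label_and_succ_mk (x := Sum.inl n) h).2]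
    simp only [nodeSucc, Sum.elim_inl, List.map_map]
    rfl

noncomputable def StronglyLabeled.inr : G₂ ⟶ pushoutGraph φ₁ φ₂ where
  toFun n := Quot.mk _ (Sum.inr n)
  map_label n a h := (hSL.pushoutGraph_label_and_succ_mk (x := Sum.inr n) h).1
  map_succ n a h := by
    rw [(hSL.pushoutGraph_label_and_succ_mk (x := Sum.inr n) h).2]
    simp only [nodeSucc, Sum.elim_inr, List.map_map]
    rfl

variable (φ₁ φ₂) in
noncomputable def pushoutDesc {W : OGraph Ω ar} (f : Hom G₁ W) (g : Hom G₂ W)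
    (hfg : ∀ n₀, f.toFun (φ₁.toFun n₀) = g.toFun (φ₂.toFun n₀)) :
    Hom (pushoutGraph φ₁ φ₂) W where
  toFun := Quot.lift (Sum.elim f.toFun g.toFun) (by rintro _ _ ⟨n₀, rfl, rfl⟩; exact hfg n₀)
  map_label c a h := by
    obtain ⟨x, rfl, hx, -⟩ := exists_rep_of_pushoutGraph_label_eq_some φ₁ φ₂ h
    exact label_elim_of_nodeLabel_eq_some f g hx
  map_succ c a h := by
    obtain ⟨x, rfl, hx, hsucc⟩ := exists_rep_of_pushoutGraph_label_eq_some φ₁ φ₂ h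
    rw [hsucc]
    exact (succ_elim_of_nodeLabel_eq_some f g hx).trans
      (List.map_map (f := Quot.mk _) (g := Quot.lift _ _)).symm

lemma StronglyLabeled.inl_comm_inr :
    (φ₁ : G₀ ⟶ G₁) ≫ hSL.inl = (φ₂ : G₀ ⟶ G₂) ≫ hSL.inr :=
  Hom.ext (funext fun n₀ => Quot.sound ⟨n₀, rfl, rfl⟩)

noncomputable def StronglyLabeled.isColimit :
    Limits.IsColimit (Limits.PushoutCocone.mk _ _ hSL.inl_comm_inr) :=
  Limits.PushoutCocone.IsColimit.mk _
    (fun s => pushoutDesc φ₁ φ₂ s.inl s.inr fun n₀ => congrFun (congrArg Hom.toFun s.condition) n₀)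
    (fun _ => rfl) (fun _ => rfl)
    (fun _ _ h₁ h₂ => Hom.ext <| funext <| by
      rintro ⟨n | n⟩
      exacts [congrFun (congrArg Hom.toFun h₁) n, congrFun (congrArg Hom.toFun h₂) n])

end Pushout

end OGraph

/-- Every strongly labeled span of graphs has a pushout, given by the
quotient construction `pushoutGraph` with legs induced by the quotient map. -/
theorem strongly_labeled_span_has_pushout {Ω : Type} {ar : Ω → ℕ}
    {G₀ G₁ G₂ : OGraph Ω ar} (φ₁ : OGraph.Hom G₀ G₁) (φ₂ : OGraph.Hom G₀ G₂)
    (hSL : OGraph.StronglyLabeled φ₁ φ₂) :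
    ∃ (ψ₁ : OGraph.Hom G₁ (OGraph.pushoutGraph φ₁ φ₂))
      (ψ₂ : OGraph.Hom G₂ (OGraph.pushoutGraph φ₁ φ₂)),
      ψ₁.toFun = (fun n => Quot.mk (OGraph.spanRel φ₁ φ₂) (Sum.inl n)) ∧
      ψ₂.toFun = (fun n => Quot.mk (OGraph.spanRel φ₁ φ₂) (Sum.inr n)) ∧
      IsPushout (C := OGraph Ω ar) φ₁ φ₂ ψ₁ ψ₂ :=
  ⟨hSL.inl, hSL.inr, rfl, rfl, IsPushout.of_isColimit hSL.isColimit⟩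
end

section
/- Let L ← D(L,E) → R (with maps δ_{L,E} and ρ) be an LRR-rewrite rule, and let μ : L → U be an Ω-injective graph homomorphism. Then the span D(U,μ(E)) ← D(L,E) → R (with maps D_{μ,E} and ρ) is strongly labeled, and hence has a pushout in the category of graphs. -/
open CategoryTheory

/-- A graph over a signature `Ω` with arity function `ar`: nodes, an (implicit) subset of
labeled nodes (those where `label` is `some`), and a successor function assigning to each
labeled node a string of nodes whose length is the arity of its label. Unlabeled nodes
have no successors. -/
structure TGraph (Ω : Type) (ar : Ω → ℕ) where
  N : Type
  label : N → Option Ω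
  succ : N → List N
  hlen : ∀ n f, label n = some f → (succ n).length = ar f
  hnone : ∀ n, label n = none → succ n = []

namespace TGraph

variable {Ω : Type} {ar : Ω → ℕ}

/-- A graph homomorphism: a map on nodes preserving labeledness, labels and successors. -/
@[ext]
structure Hom (G H : TGraph Ω ar) where
  toFun : G.N → H.N
  map_label : ∀ n f, G.label n = some f → H.label (toFun n) = some f
  map_succ : ∀ n f, G.label n = some f → H.succ (toFun n) = (G.succ n).map toFun

def Hom.id (G : TGraph Ω ar) : Hom G G :=
  ⟨fun n => n, fun _ _ h => h, fun n _ _ => by simp⟩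

def Hom.comp {G H K : TGraph Ω ar} (φ : Hom G H) (ψ : Hom H K) : Hom G K where
  toFun := fun n => ψ.toFun (φ.toFun n)
  map_label := fun n f h => ψ.map_label _ f (φ.map_label n f h)
  map_succ := fun n f h => by
    rw [ψ.map_succ _ f (φ.map_label n f h), φ.map_succ n f h, List.map_map]; rfl

instance : Category (TGraph Ω ar) where
  Hom := Hom
  id := Hom.id
  comp := Hom.comp
  id_comp := by intros; rfl
  comp_id := by intros; rfl
  assoc := by intros; rfl

/-- An edge of a graph: a labeled node together with a position among its successors. -/
def Edge (G : TGraph Ω ar) := Σ n : G.N, Fin (G.succ n).length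

lemma Edge.label_isSome {G : TGraph Ω ar} (e : G.Edge) : (G.label e.1).isSome := by
  have h2 : 0 < (G.succ e.1).length := Nat.lt_of_le_of_lt (Nat.zero_le _) e.2.isLt
  cases hl : G.label e.1 with
  | none => rw [G.hnone e.1 hl] at h2; simp at h2
  | some f => rfl

/-- The image of an edge under a homomorphism. -/
def Hom.edgeMap {G H : TGraph Ω ar} (φ : Hom G H) (e : G.Edge) : H.Edge :=
  ⟨φ.toFun e.1, ⟨e.2, by
    obtain ⟨f, hf⟩ := Option.isSome_iff_exists.mp e.label_isSome
    rw [φ.map_succ e.1 f hf, List.length_map]; exact e.2.isLt⟩⟩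

open Classical in
/-- The disconnected graph `D(G,E)`: nodes of `G` plus a fresh unlabeled node `n[i]`
for each edge `(n,i) ∈ E`, with each edge of `E` redirected to its fresh node. -/
noncomputable def D (G : TGraph Ω ar) (E : Set G.Edge) : TGraph Ω ar where
  N := G.N ⊕ {e : G.Edge // e ∈ E}
  label := Sum.elim G.label fun _ => none
  succ := Sum.elim
    (fun n => List.ofFn fun i : Fin (G.succ n).length =>
      if h : (⟨n, i⟩ : G.Edge) ∈ E then Sum.inr ⟨⟨n, i⟩, h⟩ else Sum.inl ((G.succ n).get i))
    (fun _ => [])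
  hlen := by
    rintro (n | e) f h
    · simpa using G.hlen n f h
    · simp at h
  hnone := by
    rintro (n | e) h
    · simp only [Sum.elim_inl] at h ⊢
      simp [List.ofFn_eq_nil_iff, G.hnone n h]
    · rfl

/-- The connection homomorphism `δ_{G,E} : D(G,E) → G`. -/
noncomputable def delta (G : TGraph Ω ar) (E : Set G.Edge) : Hom (G.D E) G where
  toFun := Sum.elim (fun n => n) (fun e => (G.succ e.1.1).get e.1.2)
  map_label := by
    rintro (n | e) f h
    · exact h
    · simp [D] at h
  map_succ := by
    rintro (n | e) f h
    · simp only [D, Sum.elim_inl, List.map_ofFn]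
      apply List.ext_getElem
      · simp
      · intro i h1 h2
        simp only [List.getElem_ofFn, Function.comp_apply]
        split <;> simp [List.get_eq_getElem]
    · simp [D] at h
end TGraph
namespace TGraph
variable {Ω : Type} {ar : Ω → ℕ}

/-- The underlying node map of the disconnected homomorphism `D_{φ,E}`. -/
def dmapFun {G H : TGraph Ω ar} (φ : Hom G H) (E : Set G.Edge) :
    (G.D E).N → (H.D (φ.edgeMap '' E)).N :=
  Sum.elim (fun n => Sum.inl (φ.toFun n))
    (fun e => Sum.inr ⟨φ.edgeMap e.1, Set.mem_image_of_mem _ e.2⟩)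

/-- `μ` is `Ω`-injective if it is injective on labeled nodes. -/
def OmegaInjective {G H : TGraph Ω ar} (μ : Hom G H) : Prop :=
  ∀ n n', (G.label n).isSome → (G.label n').isSome → μ.toFun n = μ.toFun n' → n = n'

/-- The conditions on the right leg `ρ : D(L,E) → R` of an LRR-rewrite rule:
unlabeled nodes of `L` are mapped to unlabeled nodes of `R`, injectively. -/
def IsLRRRule {L R : TGraph Ω ar} (E : Set L.Edge) (ρ : Hom (L.D E) R) : Prop :=
  (∀ n : L.N, L.label n = none → R.label (ρ.toFun (Sum.inl n)) = none) ∧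
  (∀ n n' : L.N, L.label n = none → L.label n' = none →
      ρ.toFun (Sum.inl n) = ρ.toFun (Sum.inl n') → n = n')

section Span
variable {G₀ G₁ G₂ : TGraph Ω ar}

/-- The relation on `N₁ + N₂` generated by a span: `φ₁(n₀) ∼ φ₂(n₀)`. -/
def spanRel (φ₁ : Hom G₀ G₁) (φ₂ : Hom G₀ G₂) : (G₁.N ⊕ G₂.N) → (G₁.N ⊕ G₂.N) → Prop :=
  fun x y => ∃ n₀, x = Sum.inl (φ₁.toFun n₀) ∧ y = Sum.inr (φ₂.toFun n₀)

/-- Label of a node of the disjoint union. -/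
def nodeLabel (G₁ G₂ : TGraph Ω ar) : (G₁.N ⊕ G₂.N) → Option Ω :=
  Sum.elim G₁.label G₂.label

/-- Successors of a node of the disjoint union. -/
def nodeSucc (G₁ G₂ : TGraph Ω ar) : (G₁.N ⊕ G₂.N) → List (G₁.N ⊕ G₂.N) :=
  Sum.elim (fun n => (G₁.succ n).map Sum.inl) (fun n => (G₂.succ n).map Sum.inr)

/-- A span of graphs is strongly labeled if in each equivalence class all labeled
nodes share the same label and have pairwise equivalent successors. -/
def StronglyLabeled (φ₁ : Hom G₀ G₁) (φ₂ : Hom G₀ G₂) : Prop :=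
  ∀ x y, Relation.EqvGen (spanRel φ₁ φ₂) x y →
    ∀ f g, nodeLabel G₁ G₂ x = some f → nodeLabel G₁ G₂ y = some g →
      f = g ∧ List.Forall₂ (Relation.EqvGen (spanRel φ₁ φ₂)) (nodeSucc G₁ G₂ x) (nodeSucc G₁ G₂ y)

open Classical in
/-- The candidate pushout graph of a span: nodes are the quotient of `N₁ + N₂`,
labeled classes are those containing a labeled node, labels and successors are
taken from a (chosen) labeled representative. -/
noncomputable def pushoutGraph (φ₁ : Hom G₀ G₁) (φ₂ : Hom G₀ G₂) : TGraph Ω ar where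
  N := Quot (spanRel φ₁ φ₂)
  label := fun c =>
    if h : ∃ x, Quot.mk _ x = c ∧ (nodeLabel G₁ G₂ x).isSome
    then nodeLabel G₁ G₂ h.choose else none
  succ := fun c =>
    if h : ∃ x, Quot.mk _ x = c ∧ (nodeLabel G₁ G₂ x).isSome
    then (nodeSucc G₁ G₂ h.choose).map (Quot.mk _) else []
  hlen := by
    intro c f h
    try dsimp only at h ⊢
    by_cases hx : ∃ x, Quot.mk _ x = c ∧ (nodeLabel G₁ G₂ x).isSome
    · rw [dif_pos hx] at h ⊢
      rw [List.length_map]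
      rcases hc : hx.choose with n | n <;> rw [hc] at h <;>
        simp only [nodeLabel, nodeSucc, Sum.elim_inl, Sum.elim_inr] at h ⊢ <;>
        rw [List.length_map]
      · exact G₁.hlen n f h
      · exact G₂.hlen n f h
    · rw [dif_neg hx] at h; simp at h
  hnone := by
    intro c h
    try dsimp only at h ⊢
    by_cases hx : ∃ x, Quot.mk _ x = c ∧ (nodeLabel G₁ G₂ x).isSome
    · rw [dif_pos hx] at h
      have := hx.choose_spec.2
      rw [h] at this; simp at this
    · rw [dif_neg hx]

end Span

open Classical in
/-- The disconnected graph `D̄(G,o)`: `G` plus a fresh unlabeled node `mr`, with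
all edges targeting `o` redirected to `mr`. -/
noncomputable def Dbar (G : TGraph Ω ar) (o : G.N) : TGraph Ω ar where
  N := G.N ⊕ Unit
  label := Sum.elim G.label fun _ => none
  succ := Sum.elim
    (fun n => (G.succ n).map fun t => if t = o then Sum.inr () else Sum.inl t)
    (fun _ => [])
  hlen := by
    rintro (n | u) f h
    · simp only [Sum.elim_inl] at h ⊢
      rw [List.length_map]; exact G.hlen n f h
    · simp at h
  hnone := by
    rintro (n | u) h
    · simp only [Sum.elim_inl] at h ⊢
      rw [G.hnone n h]; rfl
    · rfl

open Classical in
/-- The homomorphism `δ_μ : D̄(G,o) → G`, identity on `N_G`, sending `mr` to `o`. -/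
noncomputable def deltaBar (G : TGraph Ω ar) (o : G.N) : Hom (G.Dbar o) G where
  toFun := Sum.elim (fun n => n) fun _ => o
  map_label := by
    rintro (n | u) f h
    · exact h
    · simp [Dbar] at h
  map_succ := by
    rintro (n | u) f h
    · simp only [Dbar, Sum.elim_inl, List.map_map]
      symm
      refine (List.map_congr_left ?_).trans (List.map_id _)
      intro t ht
      by_cases h' : t = o <;> simp [h']
    · simp [Dbar] at h

open Classical in
/-- The graph obtained from `U` by redirecting all edges targeting `a` towards `b`. -/
noncomputable def redirect (U : TGraph Ω ar) (a b : U.N) : TGraph Ω ar where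
  N := U.N
  label := U.label
  succ := fun n => (U.succ n).map fun t => if t = a then b else t
  hlen := by intro n f h; (try dsimp only); rw [List.length_map]; exact U.hlen n f h
  hnone := by intro n h; (try dsimp only); rw [U.hnone n h]; rfl

/-- The graph `P` with two unlabeled nodes: `false` is `ar`, `true` is `pr`. -/
def P (Ω : Type) (ar : Ω → ℕ) : TGraph Ω ar :=
  ⟨Bool, fun _ => none, fun _ => [], fun _ _ h => by simp at h, fun _ _ => rfl⟩

/-- The switch graph `SW` with three unlabeled nodes: `some false` is `ar`,
`some true` is `pr`, `none` is `mr`. -/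
def SW (Ω : Type) (ar : Ω → ℕ) : TGraph Ω ar :=
  ⟨Option Bool, fun _ => none, fun _ => [], fun _ _ h => by simp at h, fun _ _ => rfl⟩

/-- `λ : SW → P`, sending `ar, mr ↦ ar` and `pr ↦ pr`. -/
def lamGR : Hom (SW Ω ar) (P Ω ar) :=
  ⟨fun x => x.getD false, fun _ _ h => by simp [SW] at h, fun _ _ h => by simp [SW] at h⟩

/-- `ρ : SW → P`, sending `ar ↦ ar` and `pr, mr ↦ pr`. -/
def rhoGR : Hom (SW Ω ar) (P Ω ar) :=
  ⟨fun x => x.getD true, fun _ _ h => by simp [SW] at h, fun _ _ h => by simp [SW] at h⟩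

/-- `D̄_μ : SW → D̄(U, μ(ar))`. -/
noncomputable def dbarMu {U : TGraph Ω ar} (μ : Hom (P Ω ar) U) :
    Hom (SW Ω ar) (U.Dbar (μ.toFun false)) where
  toFun := fun x => match x with
    | some b => Sum.inl (μ.toFun b)
    | none => Sum.inr ()
  map_label := fun _ _ h => by simp [SW] at h
  map_succ := fun _ _ h => by simp [SW] at h

/-- A graph with a single unlabeled node. -/
def oneUnlabeled (Ω : Type) (ar : Ω → ℕ) : TGraph Ω ar :=
  ⟨PUnit, fun _ => none, fun _ => [], fun _ _ h => by simp at h, fun _ _ => rfl⟩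

/-- A graph with a single node labeled `a` (looping on itself `ar a` times). -/
def singleLabeled (a : Ω) : TGraph Ω ar :=
  ⟨PUnit, fun _ => some a, fun _ => List.replicate (ar a) PUnit.unit,
   fun _ f h => by cases h; simp, fun _ h => by simp at h⟩

/-- The unique homomorphism from the one-point unlabeled graph to `singleLabeled a`. -/
def toSingle (a : Ω) : Hom (oneUnlabeled Ω ar) (singleLabeled a) :=
  ⟨fun _ => PUnit.unit, fun _ _ h => by simp [oneUnlabeled] at h,
   fun _ _ h => by simp [oneUnlabeled] at h⟩

end TGraph

/-!
A labeled node `m` of `L` glues `μ(m)` to `ρ(m)`, which carry the same label and whose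
successors are glued position by position. Every other gluing is harmless: a fresh node of
`D(U,μ(E))` comes from a single edge of `E` because `μ` is injective on edges, and an unlabeled
node `m` of `L` is the only node of `L` that `ρ` sends to the unlabeled node `ρ(m)`. So each class
has a member that can serve as its representative: a labeled node of `R` if the class has one,
which then shares label and successors with every labeled node of `U` in the class. Strong
labeling makes the quotient graph, labeled through such representatives, the pushout.
-/

theorem List.map_quot_mk_eq_iff {α : Type*} {r : α → α → Prop} {l l' : List α} :
    l.map (Quot.mk r) = l'.map (Quot.mk r) ↔ List.Forall₂ (Relation.EqvGen r) l l' := by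
  rw [← List.forall₂_eq_eq_eq, List.forall₂_map_left_iff, List.forall₂_map_right_iff]
  simp only [Quot.eq]

namespace TGraph

variable {Ω : Type} {ar : Ω → ℕ}

section Disconnect

variable {G H : TGraph Ω ar}

theorem Hom.edgeMap_injective {μ : Hom G H} (hμ : OmegaInjective μ) :
    Function.Injective μ.edgeMap := by
  rintro ⟨n, i⟩ ⟨n', i'⟩ h
  obtain rfl : n = n' :=
    hμ n n' (Edge.label_isSome ⟨n, i⟩) (Edge.label_isSome ⟨n', i'⟩) (congrArg Sigma.fst h)
  obtain rfl : i = i' := Fin.ext (congrArg (fun e : H.Edge => (e.2 : ℕ)) h)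
  rfl

theorem D_succ_inl_length (E : Set G.Edge) (n : G.N) :
    ((G.D E).succ (Sum.inl n)).length = (G.succ n).length :=
  List.length_ofFn

open Classical in
theorem D_succ_inl_getElem (E : Set G.Edge) (n : G.N) (i : ℕ) (hi : i < (G.succ n).length) :
    ((G.D E).succ (Sum.inl n))[i]'(by rwa [D_succ_inl_length]) =
      if h : (⟨n, ⟨i, hi⟩⟩ : G.Edge) ∈ E then Sum.inr ⟨_, h⟩ else Sum.inl (G.succ n)[i] :=
  List.getElem_ofFn _

/-- The disconnected homomorphism `D_{μ,E} : D(G,E) → D(H,μ(E))`. -/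
noncomputable def Hom.dmap (μ : Hom G H) (hμ : OmegaInjective μ) (E : Set G.Edge) :
    Hom (G.D E) (H.D (μ.edgeMap '' E)) where
  toFun := dmapFun μ E
  map_label := by
    rintro (n | e) f h
    · exact μ.map_label n f h
    · nomatch h
  map_succ := by
    rintro (n | e) f h
    · have hsucc := μ.map_succ n f h
      have hlen : (H.succ (μ.toFun n)).length = (G.succ n).length := by simp [hsucc]
      show (H.D _).succ (Sum.inl (μ.toFun n)) = _
      apply List.ext_getElem
      · simp only [List.length_map, D_succ_inl_length, hlen]
      · intro i hi hi'
        have hiG : i < (G.succ n).length := by simpa [D_succ_inl_length] using hi'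
        have hiH : i < (H.succ (μ.toFun n)).length := hlen ▸ hiG
        rw [List.getElem_map, D_succ_inl_getElem (hi := hiG), D_succ_inl_getElem (hi := hiH)]
        have hmem : (⟨μ.toFun n, ⟨i, hiH⟩⟩ : H.Edge) ∈ μ.edgeMap '' E ↔ ⟨n, ⟨i, hiG⟩⟩ ∈ E :=
          (Hom.edgeMap_injective hμ).mem_set_image (a := ⟨n, ⟨i, hiG⟩⟩)
        by_cases hE : (⟨n, ⟨i, hiG⟩⟩ : G.Edge) ∈ E
        · rw [dif_pos hE, dif_pos (hmem.mpr hE)]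
          rfl
        · rw [dif_neg hE, dif_neg (mt hmem.mp hE)]
          show Sum.inl _ = Sum.inl (μ.toFun _)
          simp only [hsucc, List.getElem_map]
    · nomatch h

end Disconnect

section Span

variable {G₀ G₁ G₂ : TGraph Ω ar} (φ₁ : Hom G₀ G₁) (φ₂ : Hom G₀ G₂)

def succClasses (x : G₁.N ⊕ G₂.N) : List (Quot (spanRel φ₁ φ₂)) :=
  (nodeSucc G₁ G₂ x).map (Quot.mk _)

theorem succClasses_inl_eq_inr {z : G₀.N} {f : Ω} (hz : G₀.label z = some f) :
    succClasses φ₁ φ₂ (Sum.inl (φ₁.toFun z)) = succClasses φ₁ φ₂ (Sum.inr (φ₂.toFun z)) := by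
  simp only [succClasses, nodeSucc, Sum.elim_inl, Sum.elim_inr, φ₁.map_succ z f hz,
    φ₂.map_succ z f hz, List.map_map]
  exact List.map_congr_left fun w _ => Quot.sound ⟨w, rfl, rfl⟩

variable {φ₁ φ₂}

theorem stronglyLabeled_of_invariant (ν : G₁.N ⊕ G₂.N → G₁.N ⊕ G₂.N)
    (hν : ∀ x y, spanRel φ₁ φ₂ x y → ν x = ν y)
    (hlabel : ∀ x f, nodeLabel G₁ G₂ x = some f →
      nodeLabel G₁ G₂ (ν x) = some f ∧ succClasses φ₁ φ₂ x = succClasses φ₁ φ₂ (ν x)) :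
    StronglyLabeled φ₁ φ₂ := by
  intro x y hxy f g hf hg
  have hνxy : ν x = ν y := congrArg (Quot.lift ν hν) (Quot.eqvGen_sound hxy)
  obtain ⟨hfν, hsx⟩ := hlabel x f hf
  obtain ⟨hgν, hsy⟩ := hlabel y g hg
  rw [hνxy] at hfν hsx
  exact ⟨Option.some_injective _ (hfν.symm.trans hgν),
    List.map_quot_mk_eq_iff.mp (hsx.trans hsy.symm)⟩

theorem StronglyLabeled.eq_of_mk_eq (h : StronglyLabeled φ₁ φ₂) {x y : G₁.N ⊕ G₂.N} {f g : Ω}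
    (hxy : Quot.mk (spanRel φ₁ φ₂) x = Quot.mk _ y)
    (hf : nodeLabel G₁ G₂ x = some f) (hg : nodeLabel G₁ G₂ y = some g) :
    f = g ∧ succClasses φ₁ φ₂ x = succClasses φ₁ φ₂ y :=
  have ⟨hfg, hsucc⟩ := h x y (Quot.eqvGen_exact hxy) f g hf hg
  ⟨hfg, List.map_quot_mk_eq_iff.mpr hsucc⟩

theorem exists_mk_eq_of_pushoutGraph_label {c : Quot (spanRel φ₁ φ₂)} {f : Ω}
    (hc : (pushoutGraph φ₁ φ₂).label c = some f) :
    ∃ x, Quot.mk _ x = c ∧ nodeLabel G₁ G₂ x = some f := by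
  dsimp only [pushoutGraph] at hc
  split_ifs at hc with hx
  exact ⟨hx.choose, hx.choose_spec.1, hc⟩

theorem StronglyLabeled.pushoutGraph_mk (h : StronglyLabeled φ₁ φ₂) {x : G₁.N ⊕ G₂.N} {f : Ω}
    (hx : nodeLabel G₁ G₂ x = some f) :
    (pushoutGraph φ₁ φ₂).label (Quot.mk _ x) = some f ∧
      (pushoutGraph φ₁ φ₂).succ (Quot.mk _ x) = succClasses φ₁ φ₂ x := by
  have hex : ∃ y, Quot.mk (spanRel φ₁ φ₂) y = Quot.mk _ x ∧ (nodeLabel G₁ G₂ y).isSome :=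
    ⟨x, rfl, by simp [hx]⟩
  obtain ⟨hy, hylabeled⟩ := hex.choose_spec
  obtain ⟨g, hg⟩ := Option.isSome_iff_exists.mp hylabeled
  obtain ⟨rfl, hsucc⟩ := h.eq_of_mk_eq hy hg hx
  dsimp only [pushoutGraph]
  rw [dif_pos hex, dif_pos hex]
  exact ⟨hg, hsucc⟩

noncomputable def pushoutInl (h : StronglyLabeled φ₁ φ₂) : Hom G₁ (pushoutGraph φ₁ φ₂) where
  toFun n := Quot.mk _ (Sum.inl n)
  map_label n _ hn := (h.pushoutGraph_mk (x := Sum.inl n) hn).1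
  map_succ n _ hn := by
    rw [(h.pushoutGraph_mk (x := Sum.inl n) hn).2]
    exact List.map_map ..

noncomputable def pushoutInr (h : StronglyLabeled φ₁ φ₂) : Hom G₂ (pushoutGraph φ₁ φ₂) where
  toFun n := Quot.mk _ (Sum.inr n)
  map_label n _ hn := (h.pushoutGraph_mk (x := Sum.inr n) hn).1
  map_succ n _ hn := by
    rw [(h.pushoutGraph_mk (x := Sum.inr n) hn).2]
    exact List.map_map ..

noncomputable def pushoutDesc (h : StronglyLabeled φ₁ φ₂) {W : TGraph Ω ar}
    (ψ₁ : Hom G₁ W) (ψ₂ : Hom G₂ W) (hψ : ∀ z, ψ₁.toFun (φ₁.toFun z) = ψ₂.toFun (φ₂.toFun z)) :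
    Hom (pushoutGraph φ₁ φ₂) W where
  toFun := Quot.lift (Sum.elim ψ₁.toFun ψ₂.toFun) fun _ _ ⟨z, hx, hy⟩ => hx ▸ hy ▸ hψ z
  map_label c f hc := by
    obtain ⟨x | x, rfl, hx⟩ := exists_mk_eq_of_pushoutGraph_label hc
    exacts [ψ₁.map_label x f hx, ψ₂.map_label x f hx]
  map_succ c f hc := by
    obtain ⟨x, rfl, hx⟩ := exists_mk_eq_of_pushoutGraph_label hc
    rw [(h.pushoutGraph_mk hx).2]
    show W.succ _ = List.map (Quot.lift (Sum.elim ψ₁.toFun ψ₂.toFun) _ : Quot _ → W.N) _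
    rw [succClasses, List.map_map]
    rcases x with x | x
    · rw [nodeSucc, Sum.elim_inl, List.map_map]
      exact ψ₁.map_succ x f hx
    · rw [nodeSucc, Sum.elim_inr, List.map_map]
      exact ψ₂.map_succ x f hx

open CategoryTheory.Limits in
theorem StronglyLabeled.isPushout (h : StronglyLabeled φ₁ φ₂) :
    IsPushout (C := TGraph Ω ar) φ₁ φ₂ (pushoutInl h) (pushoutInr h) := by
  have hcomm : (φ₁ ≫ pushoutInl h : G₀ ⟶ pushoutGraph φ₁ φ₂) = φ₂ ≫ pushoutInr h :=
    Hom.ext (funext fun z => Quot.sound ⟨z, rfl, rfl⟩)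
  refine IsPushout.of_isColimit (c := PushoutCocone.mk _ _ hcomm)
    (PushoutCocone.IsColimit.mk _
      (fun s => pushoutDesc h s.inl s.inr fun z => congrFun (congrArg Hom.toFun s.condition) z)
      (fun _ => rfl) (fun _ => rfl) fun s m h₁ h₂ => Hom.ext (funext fun c => ?_))
  obtain ⟨x | x⟩ := c
  exacts [congrFun (congrArg Hom.toFun h₁) x, congrFun (congrArg Hom.toFun h₂) x]

end Span

section Rule

variable {L R U : TGraph Ω ar} {E : Set L.Edge} {ρ : Hom (L.D E) R} {μ : Hom L U}

/- Each class of `D(U,μ(E)) ← D(L,E) → R` is sent to one of its members, a labeled node of `R`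
whenever the class has one. -/
open Classical in
noncomputable def lrrRepU (ρ : Hom (L.D E) R) (μ : Hom L U) (u : U.N) :
    (U.D (μ.edgeMap '' E)).N ⊕ R.N :=
  if h : ∃ m, (L.label m).isSome ∧ μ.toFun m = u then Sum.inr (ρ.toFun (Sum.inl h.choose))
  else Sum.inl (Sum.inl u)

open Classical in
noncomputable def lrrRepR (ρ : Hom (L.D E) R) (μ : Hom L U) (r : R.N) :
    (U.D (μ.edgeMap '' E)).N ⊕ R.N :=
  if h : ∃ m, L.label m = none ∧ ρ.toFun (Sum.inl m) = r then lrrRepU ρ μ (μ.toFun h.choose)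
  else Sum.inr r

noncomputable def lrrRep (ρ : Hom (L.D E) R) (μ : Hom L U) :
    (U.D (μ.edgeMap '' E)).N ⊕ R.N → (U.D (μ.edgeMap '' E)).N ⊕ R.N :=
  Sum.elim
    (Sum.elim (lrrRepU ρ μ) fun e => lrrRepR ρ μ (ρ.toFun (Sum.inr ⟨_, e.2.choose_spec.1⟩)))
    (lrrRepR ρ μ)

theorem lrrRepU_of_labeled (hμ : OmegaInjective μ) {m : L.N} (hm : (L.label m).isSome) :
    lrrRepU ρ μ (μ.toFun m) = Sum.inr (ρ.toFun (Sum.inl m)) := by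
  have h : ∃ m', (L.label m').isSome ∧ μ.toFun m' = μ.toFun m := ⟨m, hm, rfl⟩
  rw [lrrRepU, dif_pos h, hμ _ _ h.choose_spec.1 hm h.choose_spec.2]

theorem lrrRepR_of_unlabeled (hrule : IsLRRRule E ρ) {m : L.N} (hm : L.label m = none) :
    lrrRepR ρ μ (ρ.toFun (Sum.inl m)) = lrrRepU ρ μ (μ.toFun m) := by
  have h : ∃ m', L.label m' = none ∧ ρ.toFun (Sum.inl m') = ρ.toFun (Sum.inl m) := ⟨m, hm, rfl⟩
  rw [lrrRepR, dif_pos h, hrule.2 _ _ h.choose_spec.1 hm h.choose_spec.2]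

theorem lrrRepR_of_labeled (hrule : IsLRRRule E ρ) {r : R.N} (hr : (R.label r).isSome) :
    lrrRepR ρ μ r = Sum.inr r := by
  refine dif_neg ?_
  rintro ⟨m, hm, rfl⟩
  simp [hrule.1 m hm] at hr

theorem lrrRep_eq_of_spanRel (hμ : OmegaInjective μ) (hrule : IsLRRRule E ρ)
    {x y : (U.D (μ.edgeMap '' E)).N ⊕ R.N} (hxy : spanRel (μ.dmap hμ E) ρ x y) :
    lrrRep ρ μ x = lrrRep ρ μ y := by
  obtain ⟨m | e, rfl, rfl⟩ := hxy
  · show lrrRepU ρ μ (μ.toFun m) = lrrRepR ρ μ (ρ.toFun (Sum.inl m))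
    cases hm : L.label m with
    | none => exact (lrrRepR_of_unlabeled hrule hm).symm
    | some f =>
      rw [lrrRepU_of_labeled hμ (by simp [hm]),
        lrrRepR_of_labeled hrule (by simp [ρ.map_label (Sum.inl m) f hm])]
  · have he : ∃ e' ∈ E, μ.edgeMap e' = μ.edgeMap e.1 := Set.mem_image_of_mem _ e.2
    have hpre : (⟨he.choose, he.choose_spec.1⟩ : {e' // e' ∈ E}) = e :=
      Subtype.ext (Hom.edgeMap_injective hμ he.choose_spec.2)
    exact congrArg (fun e' => lrrRepR ρ μ (ρ.toFun (Sum.inr e' : (L.D E).N))) hpre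

theorem lrrRep_label (hμ : OmegaInjective μ) (hrule : IsLRRRule E ρ)
    (x : (U.D (μ.edgeMap '' E)).N ⊕ R.N) (f : Ω)
    (hf : nodeLabel (U.D (μ.edgeMap '' E)) R x = some f) :
    nodeLabel (U.D (μ.edgeMap '' E)) R (lrrRep ρ μ x) = some f ∧
      succClasses (μ.dmap hμ E) ρ x = succClasses (μ.dmap hμ E) ρ (lrrRep ρ μ x) := by
  rcases x with (u | e) | r
  · rw [show lrrRep ρ μ (Sum.inl (Sum.inl u)) = lrrRepU ρ μ u from rfl]
    by_cases h : ∃ m, (L.label m).isSome ∧ μ.toFun m = u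
    · obtain ⟨m, hm, rfl⟩ := h
      obtain ⟨g, hg⟩ := Option.isSome_iff_exists.mp hm
      obtain rfl : f = g := Option.some_injective _ (hf.symm.trans (μ.map_label m g hg))
      rw [lrrRepU_of_labeled hμ hm]
      exact ⟨ρ.map_label (Sum.inl m) f hg,
        succClasses_inl_eq_inr (μ.dmap hμ E) ρ (z := Sum.inl m) hg⟩
    · rw [lrrRepU, dif_neg h]
      exact ⟨hf, rfl⟩
  · nomatch hf
  · have hr : R.label r = some f := hf
    rw [show lrrRep ρ μ (Sum.inr r) = lrrRepR ρ μ r from rfl,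
      lrrRepR_of_labeled hrule (by simp [hr])]
    exact ⟨hf, rfl⟩

theorem IsLRRRule.stronglyLabeled (hrule : IsLRRRule E ρ) (hμ : OmegaInjective μ) :
    StronglyLabeled (μ.dmap hμ E) ρ :=
  stronglyLabeled_of_invariant (lrrRep ρ μ) (fun _ _ => lrrRep_eq_of_spanRel hμ hrule)
    (lrrRep_label hμ hrule)

end Rule

end TGraph

/-- For an LRR-rewrite rule `L ← D(L,E) → R` and an Ω-injective matching
`μ : L → U`, the span `D(U,μ(E)) ← D(L,E) → R` (legs `D_{μ,E}` and `ρ`) is strongly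
labeled, hence has a pushout in the category of graphs. -/
theorem lrr_span_strongly_labeled {Ω : Type} {ar : Ω → ℕ} {L R U : TGraph Ω ar}
    (E : Set L.Edge) (ρ : TGraph.Hom (L.D E) R) (hrule : TGraph.IsLRRRule E ρ)
    (μ : TGraph.Hom L U) (hμ : TGraph.OmegaInjective μ) :
    ∃ d : TGraph.Hom (L.D E) (U.D (μ.edgeMap '' E)),
      d.toFun = TGraph.dmapFun μ E ∧
      TGraph.StronglyLabeled d ρ ∧
      ∃ (V : TGraph Ω ar) (i₁ : TGraph.Hom (U.D (μ.edgeMap '' E)) V)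
        (i₂ : TGraph.Hom R V), IsPushout (C := TGraph Ω ar) d ρ i₁ i₂ :=
  have h := hrule.stronglyLabeled hμ
  ⟨μ.dmap hμ E, rfl, h, _, _, _, h.isPushout⟩
end

section
/- Let L ← D(L,E) → R be an LRR-rewrite rule and μ : L → U an Ω-injective matching, and let V (with ν : R → V, ρ' : D(U,μ(E)) → V) be the pushout of the span D(U,μ(E)) ← D(L,E) → R. Then representatives of the equivalence classes of N_R + N_{D(U,μ(E))} can be chosen so that the set of labeled nodes of V satisfies N_V^Ω = (N_U^Ω − μ(N_L^Ω)) + N_R^Ω; in particular, ν is injective on labeled nodes of R, ρ' is injective on the labeled nodes of U not in the image μ(N_L^Ω), and these two sets of images are disjoint and cover N_V^Ω. -/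
open CategoryTheory

/-- A graph over a signature `Ω` with arity function `ar`: nodes, an (implicit) subset of
labeled nodes (those where `label` is `some`), and a successor function assigning to each
labeled node a string of nodes whose length is the arity of its label. Unlabeled nodes
have no successors. -/
structure LGraph (Ω : Type) (ar : Ω → ℕ) where
  N : Type
  label : N → Option Ω
  succ : N → List N
  hlen : ∀ n f, label n = some f → (succ n).length = ar f
  hnone : ∀ n, label n = none → succ n = []

namespace LGraph

variable {Ω : Type} {ar : Ω → ℕ}

/-- A graph homomorphism: a map on nodes preserving labeledness, labels and successors. -/
@[ext]
structure Hom (G H : LGraph Ω ar) where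
  toFun : G.N → H.N
  map_label : ∀ n f, G.label n = some f → H.label (toFun n) = some f
  map_succ : ∀ n f, G.label n = some f → H.succ (toFun n) = (G.succ n).map toFun

def Hom.id (G : LGraph Ω ar) : Hom G G :=
  ⟨fun n => n, fun _ _ h => h, fun n _ _ => by simp⟩

def Hom.comp {G H K : LGraph Ω ar} (φ : Hom G H) (ψ : Hom H K) : Hom G K where
  toFun := fun n => ψ.toFun (φ.toFun n)
  map_label := fun n f h => ψ.map_label _ f (φ.map_label n f h)
  map_succ := fun n f h => by
    rw [ψ.map_succ _ f (φ.map_label n f h), φ.map_succ n f h, List.map_map]; rfl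

instance : Category (LGraph Ω ar) where
  Hom := Hom
  id := Hom.id
  comp := Hom.comp
  id_comp := by intros; rfl
  comp_id := by intros; rfl
  assoc := by intros; rfl

/-- An edge of a graph: a labeled node together with a position among its successors. -/
def Edge (G : LGraph Ω ar) := Σ n : G.N, Fin (G.succ n).length

lemma Edge.label_isSome {G : LGraph Ω ar} (e : G.Edge) : (G.label e.1).isSome := by
  have h2 : 0 < (G.succ e.1).length := Nat.lt_of_le_of_lt (Nat.zero_le _) e.2.isLt
  cases hl : G.label e.1 with
  | none => rw [G.hnone e.1 hl] at h2; simp at h2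
  | some f => rfl

/-- The image of an edge under a homomorphism. -/
def Hom.edgeMap {G H : LGraph Ω ar} (φ : Hom G H) (e : G.Edge) : H.Edge :=
  ⟨φ.toFun e.1, ⟨e.2, by
    obtain ⟨f, hf⟩ := Option.isSome_iff_exists.mp e.label_isSome
    rw [φ.map_succ e.1 f hf, List.length_map]; exact e.2.isLt⟩⟩

open Classical in
/-- The disconnected graph `D(G,E)`: nodes of `G` plus a fresh unlabeled node `n[i]`
for each edge `(n,i) ∈ E`, with each edge of `E` redirected to its fresh node. -/
noncomputable def D (G : LGraph Ω ar) (E : Set G.Edge) : LGraph Ω ar where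
  N := G.N ⊕ {e : G.Edge // e ∈ E}
  label := Sum.elim G.label fun _ => none
  succ := Sum.elim
    (fun n => List.ofFn fun i : Fin (G.succ n).length =>
      if h : (⟨n, i⟩ : G.Edge) ∈ E then Sum.inr ⟨⟨n, i⟩, h⟩ else Sum.inl ((G.succ n).get i))
    (fun _ => [])
  hlen := by
    rintro (n | e) f h
    · simpa using G.hlen n f h
    · simp at h
  hnone := by
    rintro (n | e) h
    · simp only [Sum.elim_inl] at h ⊢
      simp [List.ofFn_eq_nil_iff, G.hnone n h]
    · rfl

/-- The connection homomorphism `δ_{G,E} : D(G,E) → G`. -/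
noncomputable def delta (G : LGraph Ω ar) (E : Set G.Edge) : Hom (G.D E) G where
  toFun := Sum.elim (fun n => n) (fun e => (G.succ e.1.1).get e.1.2)
  map_label := by
    rintro (n | e) f h
    · exact h
    · simp [D] at h
  map_succ := by
    rintro (n | e) f h
    · simp only [D, Sum.elim_inl, List.map_ofFn]
      apply List.ext_getElem
      · simp
      · intro i h1 h2
        simp only [List.getElem_ofFn, Function.comp_apply]
        split <;> simp [List.get_eq_getElem]
    · simp [D] at h
end LGraph
namespace LGraph
variable {Ω : Type} {ar : Ω → ℕ}

/-- The underlying node map of the disconnected homomorphism `D_{φ,E}`. -/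
def dmapFun {G H : LGraph Ω ar} (φ : Hom G H) (E : Set G.Edge) :
    (G.D E).N → (H.D (φ.edgeMap '' E)).N :=
  Sum.elim (fun n => Sum.inl (φ.toFun n))
    (fun e => Sum.inr ⟨φ.edgeMap e.1, Set.mem_image_of_mem _ e.2⟩)

/-- `μ` is `Ω`-injective if it is injective on labeled nodes. -/
def OmegaInjective {G H : LGraph Ω ar} (μ : Hom G H) : Prop :=
  ∀ n n', (G.label n).isSome → (G.label n').isSome → μ.toFun n = μ.toFun n' → n = n'

/-- The conditions on the right leg `ρ : D(L,E) → R` of an LRR-rewrite rule: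
unlabeled nodes of `L` are mapped to unlabeled nodes of `R`, injectively. -/
def IsLRRRule {L R : LGraph Ω ar} (E : Set L.Edge) (ρ : Hom (L.D E) R) : Prop :=
  (∀ n : L.N, L.label n = none → R.label (ρ.toFun (Sum.inl n)) = none) ∧
  (∀ n n' : L.N, L.label n = none → L.label n' = none →
      ρ.toFun (Sum.inl n) = ρ.toFun (Sum.inl n') → n = n')

section Span
variable {G₀ G₁ G₂ : LGraph Ω ar}

/-- The relation on `N₁ + N₂` generated by a span: `φ₁(n₀) ∼ φ₂(n₀)`. -/
def spanRel (φ₁ : Hom G₀ G₁) (φ₂ : Hom G₀ G₂) : (G₁.N ⊕ G₂.N) → (G₁.N ⊕ G₂.N) → Prop :=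
  fun x y => ∃ n₀, x = Sum.inl (φ₁.toFun n₀) ∧ y = Sum.inr (φ₂.toFun n₀)

/-- Label of a node of the disjoint union. -/
def nodeLabel (G₁ G₂ : LGraph Ω ar) : (G₁.N ⊕ G₂.N) → Option Ω :=
  Sum.elim G₁.label G₂.label

/-- Successors of a node of the disjoint union. -/
def nodeSucc (G₁ G₂ : LGraph Ω ar) : (G₁.N ⊕ G₂.N) → List (G₁.N ⊕ G₂.N) :=
  Sum.elim (fun n => (G₁.succ n).map Sum.inl) (fun n => (G₂.succ n).map Sum.inr)

/-- A span of graphs is strongly labeled if in each equivalence class all labeled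
nodes share the same label and have pairwise equivalent successors. -/
def StronglyLabeled (φ₁ : Hom G₀ G₁) (φ₂ : Hom G₀ G₂) : Prop :=
  ∀ x y, Relation.EqvGen (spanRel φ₁ φ₂) x y →
    ∀ f g, nodeLabel G₁ G₂ x = some f → nodeLabel G₁ G₂ y = some g →
      f = g ∧ List.Forall₂ (Relation.EqvGen (spanRel φ₁ φ₂)) (nodeSucc G₁ G₂ x) (nodeSucc G₁ G₂ y)

open Classical in
/-- The candidate pushout graph of a span: nodes are the quotient of `N₁ + N₂`,
labeled classes are those containing a labeled node, labels and successors are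
taken from a (chosen) labeled representative. -/
noncomputable def pushoutGraph (φ₁ : Hom G₀ G₁) (φ₂ : Hom G₀ G₂) : LGraph Ω ar where
  N := Quot (spanRel φ₁ φ₂)
  label := fun c =>
    if h : ∃ x, Quot.mk _ x = c ∧ (nodeLabel G₁ G₂ x).isSome
    then nodeLabel G₁ G₂ h.choose else none
  succ := fun c =>
    if h : ∃ x, Quot.mk _ x = c ∧ (nodeLabel G₁ G₂ x).isSome
    then (nodeSucc G₁ G₂ h.choose).map (Quot.mk _) else []
  hlen := by
    intro c f h
    try dsimp only at h ⊢
    by_cases hx : ∃ x, Quot.mk _ x = c ∧ (nodeLabel G₁ G₂ x).isSome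
    · rw [dif_pos hx] at h ⊢
      rw [List.length_map]
      rcases hc : hx.choose with n | n <;> rw [hc] at h <;>
        simp only [nodeLabel, nodeSucc, Sum.elim_inl, Sum.elim_inr] at h ⊢ <;>
        rw [List.length_map]
      · exact G₁.hlen n f h
      · exact G₂.hlen n f h
    · rw [dif_neg hx] at h; simp at h
  hnone := by
    intro c h
    try dsimp only at h ⊢
    by_cases hx : ∃ x, Quot.mk _ x = c ∧ (nodeLabel G₁ G₂ x).isSome
    · rw [dif_pos hx] at h
      have := hx.choose_spec.2
      rw [h] at this; simp at this
    · rw [dif_neg hx]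

end Span

open Classical in
/-- The disconnected graph `D̄(G,o)`: `G` plus a fresh unlabeled node `mr`, with
all edges targeting `o` redirected to `mr`. -/
noncomputable def Dbar (G : LGraph Ω ar) (o : G.N) : LGraph Ω ar where
  N := G.N ⊕ Unit
  label := Sum.elim G.label fun _ => none
  succ := Sum.elim
    (fun n => (G.succ n).map fun t => if t = o then Sum.inr () else Sum.inl t)
    (fun _ => [])
  hlen := by
    rintro (n | u) f h
    · simp only [Sum.elim_inl] at h ⊢
      rw [List.length_map]; exact G.hlen n f h
    · simp at h
  hnone := by
    rintro (n | u) h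
    · simp only [Sum.elim_inl] at h ⊢
      rw [G.hnone n h]; rfl
    · rfl

open Classical in
/-- The homomorphism `δ_μ : D̄(G,o) → G`, identity on `N_G`, sending `mr` to `o`. -/
noncomputable def deltaBar (G : LGraph Ω ar) (o : G.N) : Hom (G.Dbar o) G where
  toFun := Sum.elim (fun n => n) fun _ => o
  map_label := by
    rintro (n | u) f h
    · exact h
    · simp [Dbar] at h
  map_succ := by
    rintro (n | u) f h
    · simp only [Dbar, Sum.elim_inl, List.map_map]
      symm
      refine (List.map_congr_left ?_).trans (List.map_id _)
      intro t ht
      by_cases h' : t = o <;> simp [h']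
    · simp [Dbar] at h

open Classical in
/-- The graph obtained from `U` by redirecting all edges targeting `a` towards `b`. -/
noncomputable def redirect (U : LGraph Ω ar) (a b : U.N) : LGraph Ω ar where
  N := U.N
  label := U.label
  succ := fun n => (U.succ n).map fun t => if t = a then b else t
  hlen := by intro n f h; (try dsimp only); rw [List.length_map]; exact U.hlen n f h
  hnone := by intro n h; (try dsimp only); rw [U.hnone n h]; rfl

/-- The graph `P` with two unlabeled nodes: `false` is `ar`, `true` is `pr`. -/
def P (Ω : Type) (ar : Ω → ℕ) : LGraph Ω ar :=
  ⟨Bool, fun _ => none, fun _ => [], fun _ _ h => by simp at h, fun _ _ => rfl⟩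

/-- The switch graph `SW` with three unlabeled nodes: `some false` is `ar`,
`some true` is `pr`, `none` is `mr`. -/
def SW (Ω : Type) (ar : Ω → ℕ) : LGraph Ω ar :=
  ⟨Option Bool, fun _ => none, fun _ => [], fun _ _ h => by simp at h, fun _ _ => rfl⟩

/-- `λ : SW → P`, sending `ar, mr ↦ ar` and `pr ↦ pr`. -/
def lamGR : Hom (SW Ω ar) (P Ω ar) :=
  ⟨fun x => x.getD false, fun _ _ h => by simp [SW] at h, fun _ _ h => by simp [SW] at h⟩

/-- `ρ : SW → P`, sending `ar ↦ ar` and `pr, mr ↦ pr`. -/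
def rhoGR : Hom (SW Ω ar) (P Ω ar) :=
  ⟨fun x => x.getD true, fun _ _ h => by simp [SW] at h, fun _ _ h => by simp [SW] at h⟩

/-- `D̄_μ : SW → D̄(U, μ(ar))`. -/
noncomputable def dbarMu {U : LGraph Ω ar} (μ : Hom (P Ω ar) U) :
    Hom (SW Ω ar) (U.Dbar (μ.toFun false)) where
  toFun := fun x => match x with
    | some b => Sum.inl (μ.toFun b)
    | none => Sum.inr ()
  map_label := fun _ _ h => by simp [SW] at h
  map_succ := fun _ _ h => by simp [SW] at h

/-- A graph with a single unlabeled node. -/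
def oneUnlabeled (Ω : Type) (ar : Ω → ℕ) : LGraph Ω ar :=
  ⟨PUnit, fun _ => none, fun _ => [], fun _ _ h => by simp at h, fun _ _ => rfl⟩

/-- A graph with a single node labeled `a` (looping on itself `ar a` times). -/
def singleLabeled (a : Ω) : LGraph Ω ar :=
  ⟨PUnit, fun _ => some a, fun _ => List.replicate (ar a) PUnit.unit,
   fun _ f h => by cases h; simp, fun _ h => by simp at h⟩

/-- The unique homomorphism from the one-point unlabeled graph to `singleLabeled a`. -/
def toSingle (a : Ω) : Hom (oneUnlabeled Ω ar) (singleLabeled a) :=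
  ⟨fun _ => PUnit.unit, fun _ _ h => by simp [oneUnlabeled] at h,
   fun _ _ h => by simp [oneUnlabeled] at h⟩

end LGraph

/-!
Send every node of `D(U,μ(E)) + R` to a representative in `N_R + N_U`: a `U`-node `μ(m)` with
`m` labeled goes to `ρ(m)`, an `R`-node `ρ(n)` with `n` unlabeled goes wherever `μ(n)` goes, a
fresh node of `D(U,μ(E))` goes wherever the `R`-image of its preimage goes, and every other node
to itself. Ω-injectivity of `μ` (hence injectivity on edges) and the two LRR conditions on `ρ`
make this well defined and constant along the generating relation of the pushout, so it
descends to the quotient. Labeled `R`-nodes and labeled `U`-nodes outside `μ(N_L^Ω)` are their own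
representatives, which gives injectivity and disjointness; covering is read off a labeled
member of the class.
-/

namespace LGraph

variable {Ω : Type} {ar : Ω → ℕ} {L R U : LGraph Ω ar}

lemma Hom.label_isSome {G H : LGraph Ω ar} (φ : Hom G H) {n : G.N} (hn : (G.label n).isSome) :
    (H.label (φ.toFun n)).isSome := by
  obtain ⟨f, hf⟩ := Option.isSome_iff_exists.mp hn
  rw [φ.map_label n f hf]
  rfl

lemma OmegaInjective.edgeMap_injective {μ : Hom L U} (hμ : OmegaInjective μ) :
    Function.Injective μ.edgeMap := by
  rintro ⟨n, i⟩ ⟨n', i'⟩ h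
  obtain rfl : n = n' :=
    hμ _ _ (Edge.label_isSome ⟨n, i⟩) (Edge.label_isSome ⟨n', i'⟩) (congrArg Sigma.fst h)
  have hi : (i : ℕ) = i' := by simpa [Hom.edgeMap] using congrArg (fun e : U.Edge => (e.2 : ℕ)) h
  exact Sigma.ext rfl (heq_of_eq (Fin.ext hi))

lemma pushoutGraph_label_isSome {G₀ G₁ G₂ : LGraph Ω ar} {φ₁ : Hom G₀ G₁} {φ₂ : Hom G₀ G₂}
    {c : (pushoutGraph φ₁ φ₂).N} (hc : ((pushoutGraph φ₁ φ₂).label c).isSome) :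
    ∃ x, Quot.mk (spanRel φ₁ φ₂) x = c ∧ (nodeLabel G₁ G₂ x).isSome := by
  by_contra hx
  simp [pushoutGraph, dif_neg hx] at hc

section Representative

variable {E : Set L.Edge} (ρ : Hom (L.D E) R) (μ : Hom L U)

open Classical in
noncomputable def repU (u : U.N) : R.N ⊕ U.N :=
  if h : ∃ m, (L.label m).isSome ∧ μ.toFun m = u then Sum.inl (ρ.toFun (Sum.inl h.choose))
  else Sum.inr u

open Classical in
noncomputable def repR (r : R.N) : R.N ⊕ U.N :=
  if h : ∃ n, L.label n = none ∧ ρ.toFun (Sum.inl n) = r then repU ρ μ (μ.toFun h.choose)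
  else Sum.inl r

noncomputable def rep : (U.D (μ.edgeMap '' E)).N ⊕ R.N → R.N ⊕ U.N :=
  Sum.elim
    (Sum.elim (repU ρ μ) fun e => repR ρ μ (ρ.toFun (Sum.inr ⟨e.2.choose, e.2.choose_spec.1⟩)))
    (repR ρ μ)

variable {ρ μ}

@[simp]
lemma rep_inl_inl (u : U.N) : rep ρ μ (Sum.inl (Sum.inl u)) = repU ρ μ u := rfl

@[simp]
lemma rep_inr (r : R.N) : rep ρ μ (Sum.inr r) = repR ρ μ r := rfl

lemma repU_of_forall_ne {u : U.N} (hu : ∀ m, (L.label m).isSome → μ.toFun m ≠ u) :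
    repU ρ μ u = Sum.inr u :=
  dif_neg fun ⟨m, hm, hmu⟩ => hu m hm hmu

lemma repU_apply_of_isSome (hμ : OmegaInjective μ) {m : L.N} (hm : (L.label m).isSome) :
    repU ρ μ (μ.toFun m) = Sum.inl (ρ.toFun (Sum.inl m)) := by
  have h : ∃ m', (L.label m').isSome ∧ μ.toFun m' = μ.toFun m := ⟨m, hm, rfl⟩
  rw [repU, dif_pos h, hμ _ _ h.choose_spec.1 hm h.choose_spec.2]

lemma repR_of_isSome (hrule : IsLRRRule E ρ) {r : R.N} (hr : (R.label r).isSome) :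
    repR ρ μ r = Sum.inl r := by
  refine dif_neg ?_
  rintro ⟨n, hn, rfl⟩
  simp [hrule.1 n hn] at hr

lemma repR_apply_of_eq_none (hrule : IsLRRRule E ρ) {n : L.N} (hn : L.label n = none) :
    repR ρ μ (ρ.toFun (Sum.inl n)) = repU ρ μ (μ.toFun n) := by
  have h : ∃ n', L.label n' = none ∧ ρ.toFun (Sum.inl n') = ρ.toFun (Sum.inl n) := ⟨n, hn, rfl⟩
  rw [repR, dif_pos h, hrule.2 _ _ h.choose_spec.1 hn h.choose_spec.2]

variable {d : Hom (L.D E) (U.D (μ.edgeMap '' E))}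

lemma rep_eq_of_spanRel (hrule : IsLRRRule E ρ) (hμ : OmegaInjective μ)
    (hd : d.toFun = dmapFun μ E) {x y : (U.D (μ.edgeMap '' E)).N ⊕ R.N}
    (hxy : spanRel d ρ x y) : rep ρ μ x = rep ρ μ y := by
  obtain ⟨n₀ | e, rfl, rfl⟩ := hxy <;> rw [hd]
  · change repU ρ μ (μ.toFun n₀) = repR ρ μ (ρ.toFun (Sum.inl n₀))
    cases hn : L.label n₀
    · rw [repR_apply_of_eq_none hrule hn]
    · have hn' : (L.label n₀).isSome := by simp [hn]
      rw [repU_apply_of_isSome hμ hn',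
        repR_of_isSome hrule (ρ.label_isSome (n := Sum.inl n₀) hn')]
  · have hmem : μ.edgeMap e.1 ∈ μ.edgeMap '' E := Set.mem_image_of_mem _ e.2
    have hpre : (⟨hmem.choose, hmem.choose_spec.1⟩ : {e' // e' ∈ E}) = e :=
      Subtype.ext (OmegaInjective.edgeMap_injective hμ hmem.choose_spec.2)
    change repR ρ μ (ρ.toFun (Sum.inr ⟨hmem.choose, hmem.choose_spec.1⟩)) = _
    rw [hpre]
    rfl

lemma rep_eq_of_mk_eq (hrule : IsLRRRule E ρ) (hμ : OmegaInjective μ)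
    (hd : d.toFun = dmapFun μ E) {x y : (U.D (μ.edgeMap '' E)).N ⊕ R.N}
    (hxy : Quot.mk (spanRel d ρ) x = Quot.mk (spanRel d ρ) y) : rep ρ μ x = rep ρ μ y :=
  congrArg (Quot.lift (rep ρ μ) fun _ _ => rep_eq_of_spanRel hrule hμ hd) hxy

lemma mk_inl_apply_eq_mk_inr (hd : d.toFun = dmapFun μ E) (n : L.N) :
    Quot.mk (spanRel d ρ) (Sum.inl (Sum.inl (μ.toFun n))) =
      Quot.mk (spanRel d ρ) (Sum.inr (ρ.toFun (Sum.inl n))) :=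
  Quot.sound ⟨Sum.inl n, by rw [hd]; rfl, rfl⟩

end Representative

end LGraph

/-- Description of the labeled nodes of the pushout `V` of the span
`D(U,μ(E)) ← D(L,E) → R`: `N_V^Ω = (N_U^Ω − μ(N_L^Ω)) + N_R^Ω`. The quotient map is
injective on labeled nodes of `R` and on labeled nodes of `U` outside `μ(N_L^Ω)`,
these two families are disjoint, and together they cover all labeled nodes of `V`. -/
theorem labeled_nodes_of_rewrite_pushout {Ω : Type} {ar : Ω → ℕ} {L R U : LGraph Ω ar}
    (E : Set L.Edge) (ρ : LGraph.Hom (L.D E) R) (hrule : LGraph.IsLRRRule E ρ)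
    (μ : LGraph.Hom L U) (hμ : LGraph.OmegaInjective μ) :
    ∀ d : LGraph.Hom (L.D E) (U.D (μ.edgeMap '' E)), d.toFun = LGraph.dmapFun μ E →
      ((∀ n n' : R.N, (R.label n).isSome → (R.label n').isSome →
          Quot.mk (LGraph.spanRel d ρ) (Sum.inr n) = Quot.mk (LGraph.spanRel d ρ) (Sum.inr n') →
          n = n') ∧
       (∀ u u' : U.N, (U.label u).isSome → (U.label u').isSome →
          (∀ nL, (L.label nL).isSome → μ.toFun nL ≠ u) →
          (∀ nL, (L.label nL).isSome → μ.toFun nL ≠ u') →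
          Quot.mk (LGraph.spanRel d ρ) (Sum.inl (Sum.inl u)) =
            Quot.mk (LGraph.spanRel d ρ) (Sum.inl (Sum.inl u')) → u = u') ∧
       (∀ u : U.N, (U.label u).isSome → (∀ nL, (L.label nL).isSome → μ.toFun nL ≠ u) →
          ∀ n : R.N, (R.label n).isSome →
          Quot.mk (LGraph.spanRel d ρ) (Sum.inl (Sum.inl u)) ≠
            Quot.mk (LGraph.spanRel d ρ) (Sum.inr n)) ∧
       (∀ c : (LGraph.pushoutGraph d ρ).N, ((LGraph.pushoutGraph d ρ).label c).isSome →
          (∃ n : R.N, (R.label n).isSome ∧ c = Quot.mk (LGraph.spanRel d ρ) (Sum.inr n)) ∨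
          (∃ u : U.N, (U.label u).isSome ∧ (∀ nL, (L.label nL).isSome → μ.toFun nL ≠ u) ∧
            c = Quot.mk (LGraph.spanRel d ρ) (Sum.inl (Sum.inl u))))) := by
  intro d hd
  refine ⟨?_, ?_, ?_, ?_⟩
  · intro n n' hn hn' h
    simpa [LGraph.repR_of_isSome hrule hn, LGraph.repR_of_isSome hrule hn']
      using LGraph.rep_eq_of_mk_eq hrule hμ hd h
  · intro u u' _ _ hu hu' h
    simpa [LGraph.repU_of_forall_ne hu, LGraph.repU_of_forall_ne hu']
      using LGraph.rep_eq_of_mk_eq hrule hμ hd h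
  · intro u _ hu n hn h
    simpa [LGraph.repU_of_forall_ne hu, LGraph.repR_of_isSome hrule hn]
      using LGraph.rep_eq_of_mk_eq hrule hμ hd h
  · intro c hc
    obtain ⟨(u | e) | n, rfl, hx⟩ := LGraph.pushoutGraph_label_isSome hc
    · by_cases hu : ∃ m, (L.label m).isSome ∧ μ.toFun m = u
      · obtain ⟨m, hm, rfl⟩ := hu
        exact Or.inl ⟨_, ρ.label_isSome (n := Sum.inl m) hm, LGraph.mk_inl_apply_eq_mk_inr hd m⟩
      · push Not at hu
        exact Or.inr ⟨u, hx, hu, rfl⟩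
    · simp [LGraph.nodeLabel, LGraph.D] at hx
    · exact Or.inl ⟨n, hx, rfl⟩
end

section
/- Ω-injectivity of the matching is necessary for LRR-rewriting: there exist an LRR-rewrite rule L ← D(L,E) → R and a non-Ω-injective matching μ : L → U such that no pushout of the span D(U,μ(E)) ← D(L,E) → R exists in the category of graphs. Concretely, take L with two nodes n₁:g, n₂:g (g unary) where succ(n₁,1)=n₂ and succ(n₂,1)=n₃ unlabeled, E = {(n₁,1),(n₂,1)}, R = D(L,E) with n₁[1] labeled b and n₂[1] labeled c (b ≠ c constants), ρ the identity on nodes, and U with a single node m:g with succ(m,1)=o:a; the matching μ identifying n₁ and n₂ to m yields a span with no pushout. -/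
open CategoryTheory

/-- A graph over a signature `Ω` with arity function `ar`: nodes, an (implicit) subset of
labeled nodes (those where `label` is `some`), and a successor function assigning to each
labeled node a string of nodes whose length is the arity of its label. Unlabeled nodes
have no successors. -/
structure TermGraph (Ω : Type) (ar : Ω → ℕ) where
  N : Type
  label : N → Option Ω
  succ : N → List N
  hlen : ∀ n f, label n = some f → (succ n).length = ar f
  hnone : ∀ n, label n = none → succ n = []

namespace TermGraph

variable {Ω : Type} {ar : Ω → ℕ}

/-- A graph homomorphism: a map on nodes preserving labeledness, labels and successors. -/
@[ext]
structure Hom (G H : TermGraph Ω ar) where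
  toFun : G.N → H.N
  map_label : ∀ n f, G.label n = some f → H.label (toFun n) = some f
  map_succ : ∀ n f, G.label n = some f → H.succ (toFun n) = (G.succ n).map toFun

def Hom.id (G : TermGraph Ω ar) : Hom G G :=
  ⟨fun n => n, fun _ _ h => h, fun n _ _ => by simp⟩

def Hom.comp {G H K : TermGraph Ω ar} (φ : Hom G H) (ψ : Hom H K) : Hom G K where
  toFun := fun n => ψ.toFun (φ.toFun n)
  map_label := fun n f h => ψ.map_label _ f (φ.map_label n f h)
  map_succ := fun n f h => by
    rw [ψ.map_succ _ f (φ.map_label n f h), φ.map_succ n f h, List.map_map]; rfl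

instance : Category (TermGraph Ω ar) where
  Hom := Hom
  id := Hom.id
  comp := Hom.comp
  id_comp := by intros; rfl
  comp_id := by intros; rfl
  assoc := by intros; rfl

/-- An edge of a graph: a labeled node together with a position among its successors. -/
def Edge (G : TermGraph Ω ar) := Σ n : G.N, Fin (G.succ n).length

lemma Edge.label_isSome {G : TermGraph Ω ar} (e : G.Edge) : (G.label e.1).isSome := by
  have h2 : 0 < (G.succ e.1).length := Nat.lt_of_le_of_lt (Nat.zero_le _) e.2.isLt
  cases hl : G.label e.1 with
  | none => rw [G.hnone e.1 hl] at h2; simp at h2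
  | some f => rfl

/-- The image of an edge under a homomorphism. -/
def Hom.edgeMap {G H : TermGraph Ω ar} (φ : Hom G H) (e : G.Edge) : H.Edge :=
  ⟨φ.toFun e.1, ⟨e.2, by
    obtain ⟨f, hf⟩ := Option.isSome_iff_exists.mp e.label_isSome
    rw [φ.map_succ e.1 f hf, List.length_map]; exact e.2.isLt⟩⟩

open Classical in
/-- The disconnected graph `D(G,E)`: nodes of `G` plus a fresh unlabeled node `n[i]`
for each edge `(n,i) ∈ E`, with each edge of `E` redirected to its fresh node. -/
noncomputable def D (G : TermGraph Ω ar) (E : Set G.Edge) : TermGraph Ω ar where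
  N := G.N ⊕ {e : G.Edge // e ∈ E}
  label := Sum.elim G.label fun _ => none
  succ := Sum.elim
    (fun n => List.ofFn fun i : Fin (G.succ n).length =>
      if h : (⟨n, i⟩ : G.Edge) ∈ E then Sum.inr ⟨⟨n, i⟩, h⟩ else Sum.inl ((G.succ n).get i))
    (fun _ => [])
  hlen := by
    rintro (n | e) f h
    · simpa using G.hlen n f h
    · simp at h
  hnone := by
    rintro (n | e) h
    · simp only [Sum.elim_inl] at h ⊢
      simp [List.ofFn_eq_nil_iff, G.hnone n h]
    · rfl

/-- The connection homomorphism `δ_{G,E} : D(G,E) → G`. -/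
noncomputable def delta (G : TermGraph Ω ar) (E : Set G.Edge) : Hom (G.D E) G where
  toFun := Sum.elim (fun n => n) (fun e => (G.succ e.1.1).get e.1.2)
  map_label := by
    rintro (n | e) f h
    · exact h
    · simp [D] at h
  map_succ := by
    rintro (n | e) f h
    · simp only [D, Sum.elim_inl, List.map_ofFn]
      apply List.ext_getElem
      · simp
      · intro i h1 h2
        simp only [List.getElem_ofFn, Function.comp_apply]
        split <;> simp [List.get_eq_getElem]
    · simp [D] at h
end TermGraph
namespace TermGraph
variable {Ω : Type} {ar : Ω → ℕ}

/-- The underlying node map of the disconnected homomorphism `D_{φ,E}`. -/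
def dmapFun {G H : TermGraph Ω ar} (φ : Hom G H) (E : Set G.Edge) :
    (G.D E).N → (H.D (φ.edgeMap '' E)).N :=
  Sum.elim (fun n => Sum.inl (φ.toFun n))
    (fun e => Sum.inr ⟨φ.edgeMap e.1, Set.mem_image_of_mem _ e.2⟩)

/-- `μ` is `Ω`-injective if it is injective on labeled nodes. -/
def OmegaInjective {G H : TermGraph Ω ar} (μ : Hom G H) : Prop :=
  ∀ n n', (G.label n).isSome → (G.label n').isSome → μ.toFun n = μ.toFun n' → n = n'

/-- The conditions on the right leg `ρ : D(L,E) → R` of an LRR-rewrite rule: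
unlabeled nodes of `L` are mapped to unlabeled nodes of `R`, injectively. -/
def IsLRRRule {L R : TermGraph Ω ar} (E : Set L.Edge) (ρ : Hom (L.D E) R) : Prop :=
  (∀ n : L.N, L.label n = none → R.label (ρ.toFun (Sum.inl n)) = none) ∧
  (∀ n n' : L.N, L.label n = none → L.label n' = none →
      ρ.toFun (Sum.inl n) = ρ.toFun (Sum.inl n') → n = n')

section Span
variable {G₀ G₁ G₂ : TermGraph Ω ar}

/-- The relation on `N₁ + N₂` generated by a span: `φ₁(n₀) ∼ φ₂(n₀)`. -/
def spanRel (φ₁ : Hom G₀ G₁) (φ₂ : Hom G₀ G₂) : (G₁.N ⊕ G₂.N) → (G₁.N ⊕ G₂.N) → Prop :=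
  fun x y => ∃ n₀, x = Sum.inl (φ₁.toFun n₀) ∧ y = Sum.inr (φ₂.toFun n₀)

/-- Label of a node of the disjoint union. -/
def nodeLabel (G₁ G₂ : TermGraph Ω ar) : (G₁.N ⊕ G₂.N) → Option Ω :=
  Sum.elim G₁.label G₂.label

/-- Successors of a node of the disjoint union. -/
def nodeSucc (G₁ G₂ : TermGraph Ω ar) : (G₁.N ⊕ G₂.N) → List (G₁.N ⊕ G₂.N) :=
  Sum.elim (fun n => (G₁.succ n).map Sum.inl) (fun n => (G₂.succ n).map Sum.inr)

/-- A span of graphs is strongly labeled if in each equivalence class all labeled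
nodes share the same label and have pairwise equivalent successors. -/
def StronglyLabeled (φ₁ : Hom G₀ G₁) (φ₂ : Hom G₀ G₂) : Prop :=
  ∀ x y, Relation.EqvGen (spanRel φ₁ φ₂) x y →
    ∀ f g, nodeLabel G₁ G₂ x = some f → nodeLabel G₁ G₂ y = some g →
      f = g ∧ List.Forall₂ (Relation.EqvGen (spanRel φ₁ φ₂)) (nodeSucc G₁ G₂ x) (nodeSucc G₁ G₂ y)

open Classical in
/-- The candidate pushout graph of a span: nodes are the quotient of `N₁ + N₂`,
labeled classes are those containing a labeled node, labels and successors are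
taken from a (chosen) labeled representative. -/
noncomputable def pushoutGraph (φ₁ : Hom G₀ G₁) (φ₂ : Hom G₀ G₂) : TermGraph Ω ar where
  N := Quot (spanRel φ₁ φ₂)
  label := fun c =>
    if h : ∃ x, Quot.mk _ x = c ∧ (nodeLabel G₁ G₂ x).isSome
    then nodeLabel G₁ G₂ h.choose else none
  succ := fun c =>
    if h : ∃ x, Quot.mk _ x = c ∧ (nodeLabel G₁ G₂ x).isSome
    then (nodeSucc G₁ G₂ h.choose).map (Quot.mk _) else []
  hlen := by
    intro c f h
    try dsimp only at h ⊢
    by_cases hx : ∃ x, Quot.mk _ x = c ∧ (nodeLabel G₁ G₂ x).isSome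
    · rw [dif_pos hx] at h ⊢
      rw [List.length_map]
      rcases hc : hx.choose with n | n <;> rw [hc] at h <;>
        simp only [nodeLabel, nodeSucc, Sum.elim_inl, Sum.elim_inr] at h ⊢ <;>
        rw [List.length_map]
      · exact G₁.hlen n f h
      · exact G₂.hlen n f h
    · rw [dif_neg hx] at h; simp at h
  hnone := by
    intro c h
    try dsimp only at h ⊢
    by_cases hx : ∃ x, Quot.mk _ x = c ∧ (nodeLabel G₁ G₂ x).isSome
    · rw [dif_pos hx] at h
      have := hx.choose_spec.2
      rw [h] at this; simp at this
    · rw [dif_neg hx]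

end Span

open Classical in
/-- The disconnected graph `D̄(G,o)`: `G` plus a fresh unlabeled node `mr`, with
all edges targeting `o` redirected to `mr`. -/
noncomputable def Dbar (G : TermGraph Ω ar) (o : G.N) : TermGraph Ω ar where
  N := G.N ⊕ Unit
  label := Sum.elim G.label fun _ => none
  succ := Sum.elim
    (fun n => (G.succ n).map fun t => if t = o then Sum.inr () else Sum.inl t)
    (fun _ => [])
  hlen := by
    rintro (n | u) f h
    · simp only [Sum.elim_inl] at h ⊢
      rw [List.length_map]; exact G.hlen n f h
    · simp at h
  hnone := by
    rintro (n | u) h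
    · simp only [Sum.elim_inl] at h ⊢
      rw [G.hnone n h]; rfl
    · rfl

open Classical in
/-- The homomorphism `δ_μ : D̄(G,o) → G`, identity on `N_G`, sending `mr` to `o`. -/
noncomputable def deltaBar (G : TermGraph Ω ar) (o : G.N) : Hom (G.Dbar o) G where
  toFun := Sum.elim (fun n => n) fun _ => o
  map_label := by
    rintro (n | u) f h
    · exact h
    · simp [Dbar] at h
  map_succ := by
    rintro (n | u) f h
    · simp only [Dbar, Sum.elim_inl, List.map_map]
      symm
      refine (List.map_congr_left ?_).trans (List.map_id _)
      intro t ht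
      by_cases h' : t = o <;> simp [h']
    · simp [Dbar] at h

open Classical in
/-- The graph obtained from `U` by redirecting all edges targeting `a` towards `b`. -/
noncomputable def redirect (U : TermGraph Ω ar) (a b : U.N) : TermGraph Ω ar where
  N := U.N
  label := U.label
  succ := fun n => (U.succ n).map fun t => if t = a then b else t
  hlen := by intro n f h; (try dsimp only); rw [List.length_map]; exact U.hlen n f h
  hnone := by intro n h; (try dsimp only); rw [U.hnone n h]; rfl

/-- The graph `P` with two unlabeled nodes: `false` is `ar`, `true` is `pr`. -/
def P (Ω : Type) (ar : Ω → ℕ) : TermGraph Ω ar :=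
  ⟨Bool, fun _ => none, fun _ => [], fun _ _ h => by simp at h, fun _ _ => rfl⟩

/-- The switch graph `SW` with three unlabeled nodes: `some false` is `ar`,
`some true` is `pr`, `none` is `mr`. -/
def SW (Ω : Type) (ar : Ω → ℕ) : TermGraph Ω ar :=
  ⟨Option Bool, fun _ => none, fun _ => [], fun _ _ h => by simp at h, fun _ _ => rfl⟩

/-- `λ : SW → P`, sending `ar, mr ↦ ar` and `pr ↦ pr`. -/
def lamGR : Hom (SW Ω ar) (P Ω ar) :=
  ⟨fun x => x.getD false, fun _ _ h => by simp [SW] at h, fun _ _ h => by simp [SW] at h⟩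

/-- `ρ : SW → P`, sending `ar ↦ ar` and `pr, mr ↦ pr`. -/
def rhoGR : Hom (SW Ω ar) (P Ω ar) :=
  ⟨fun x => x.getD true, fun _ _ h => by simp [SW] at h, fun _ _ h => by simp [SW] at h⟩

/-- `D̄_μ : SW → D̄(U, μ(ar))`. -/
noncomputable def dbarMu {U : TermGraph Ω ar} (μ : Hom (P Ω ar) U) :
    Hom (SW Ω ar) (U.Dbar (μ.toFun false)) where
  toFun := fun x => match x with
    | some b => Sum.inl (μ.toFun b)
    | none => Sum.inr ()
  map_label := fun _ _ h => by simp [SW] at h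
  map_succ := fun _ _ h => by simp [SW] at h

/-- A graph with a single unlabeled node. -/
def oneUnlabeled (Ω : Type) (ar : Ω → ℕ) : TermGraph Ω ar :=
  ⟨PUnit, fun _ => none, fun _ => [], fun _ _ h => by simp at h, fun _ _ => rfl⟩

/-- A graph with a single node labeled `a` (looping on itself `ar a` times). -/
def singleLabeled (a : Ω) : TermGraph Ω ar :=
  ⟨PUnit, fun _ => some a, fun _ => List.replicate (ar a) PUnit.unit,
   fun _ f h => by cases h; simp, fun _ h => by simp at h⟩

/-- The unique homomorphism from the one-point unlabeled graph to `singleLabeled a`. -/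
def toSingle (a : Ω) : Hom (oneUnlabeled Ω ar) (singleLabeled a) :=
  ⟨fun _ => PUnit.unit, fun _ _ h => by simp [oneUnlabeled] at h,
   fun _ _ h => by simp [oneUnlabeled] at h⟩

end TermGraph

/-! A non-`Ω`-injective matching can merge two edges of `E` whose fresh targets the rule's
right-hand side labels differently (`b` and `c`). In `D(U, μ(E))` these two targets are one
node, so any commutative square over the span would have to give one node of its apex two
different labels: the span has no cocone at all, let alone a pushout. -/

namespace TermGraph

variable {Ω : Type} {ar : Ω → ℕ}

theorem Hom.label_eq_of_toFun_eq {G H : TermGraph Ω ar} (φ : Hom G H) {x y : G.N}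
    (hxy : φ.toFun x = φ.toFun y) {f f' : Ω} (hx : G.label x = some f)
    (hy : G.label y = some f') : f = f' := by
  have h := φ.map_label x f hx
  rw [hxy, φ.map_label y f' hy] at h
  exact (Option.some_injective _ h).symm

theorem not_commSq_of_label_ne {G₀ G₁ G₂ V : TermGraph Ω ar} {φ₁ : Hom G₀ G₁}
    {φ₂ : Hom G₀ G₂} {i₁ : Hom G₁ V} {i₂ : Hom G₂ V} {x y : G₀.N}
    (hxy : φ₁.toFun x = φ₁.toFun y) {f f' : Ω} (hx : G₂.label (φ₂.toFun x) = some f)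
    (hy : G₂.label (φ₂.toFun y) = some f') (hne : f ≠ f') :
    ¬ CommSq (C := TermGraph Ω ar) φ₁ φ₂ i₁ i₂ := by
  intro sq
  have hw := congrArg Hom.toFun sq.w
  have hxy' : i₂.toFun (φ₂.toFun x) = i₂.toFun (φ₂.toFun y) :=
    calc i₂.toFun (φ₂.toFun x) = i₁.toFun (φ₁.toFun x) := (congrFun hw x).symm
      _ = i₁.toFun (φ₁.toFun y) := by rw [hxy]
      _ = i₂.toFun (φ₂.toFun y) := congrFun hw y
  exact hne (i₂.label_eq_of_toFun_eq hxy' hx hy)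

noncomputable def Hom.dmap {G H : TermGraph Ω ar} (φ : Hom G H) (E : Set G.Edge)
    (hE : φ.edgeMap ⁻¹' (φ.edgeMap '' E) ⊆ E) : Hom (G.D E) (H.D (φ.edgeMap '' E)) where
  toFun := dmapFun φ E
  map_label := by
    rintro (n | e) f h
    · exact φ.map_label n f h
    · simp [D] at h
  map_succ := by
    rintro (n | e) f h
    · have hs := φ.map_succ n f h
      simp only [D, dmapFun, Sum.elim_inl, List.map_ofFn]
      apply List.ext_getElem
      · simp [hs]
      · intro i h1 h2
        simp only [List.getElem_ofFn, Function.comp_apply]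
        split_ifs with hH hG hG
        · rfl
        · exact absurd (hE hH) hG
        · exact absurd (Set.mem_image_of_mem _ hG) hH
        · simp [List.get_eq_getElem, hs]
    · simp [D] at h

end TermGraph

namespace OmegaInjectivityCounterexample

open TermGraph

inductive Sig : Type
  | g | b | c

def arity : Sig → ℕ
  | .g => 1
  | .b | .c => 0

/- The paper's `L` is a chain `n₁ → n₂ → n₃`, but no homomorphism merges `n₁` and `n₂` there;
with self-loops on both `g`-nodes (and on the single `g`-node of `U`) the merging map `μ` is one. -/
def L : TermGraph Sig arity where
  N := Bool
  label _ := some .g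
  succ n := [n]
  hlen _ _ h := by cases h; rfl
  hnone _ h := nomatch h

def U : TermGraph Sig arity where
  N := Unit
  label _ := some .g
  succ _ := [()]
  hlen _ _ h := by cases h; rfl
  hnone _ h := nomatch h

def μ : Hom L U where
  toFun _ := ()
  map_label _ _ h := h
  map_succ _ _ _ := rfl

def E : Set L.Edge := Set.univ

/-- The fresh node `n[1]` of `D(L, E)`; positions are counted from `0` here. -/
noncomputable def fresh (n : Bool) : (L.D E).N := Sum.inr ⟨⟨n, ⟨0, Nat.one_pos⟩⟩, trivial⟩

noncomputable def R : TermGraph Sig arity where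
  N := (L.D E).N
  label := Sum.elim (fun _ => some .g) fun e => some (cond e.1.1 .c .b)
  succ := (L.D E).succ
  hlen := by
    rintro (n | e) f h
    · cases h
      exact (L.D E).hlen (Sum.inl n) .g rfl
    · cases h
      cases e.1.1 <;> rfl
  hnone := by
    rintro (n | e) h <;> cases h

noncomputable def ρ : Hom (L.D E) R where
  toFun := id
  map_label := by
    rintro (n | e) f h
    · exact h
    · cases h
  map_succ _ _ _ := (List.map_id _).symm

noncomputable def d : Hom (L.D E) (U.D (μ.edgeMap '' E)) :=
  μ.dmap E (Set.subset_univ _)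

theorem isLRRRule_ρ : IsLRRRule E ρ :=
  And.intro (fun _ h => nomatch h) fun _ _ h => nomatch h

theorem not_omegaInjective_μ : ¬ OmegaInjective μ :=
  fun hinj => Bool.false_ne_true (hinj false true rfl rfl rfl)

theorem not_exists_isPushout :
    ¬ ∃ (V : TermGraph Sig arity) (i₁ : Hom (U.D (μ.edgeMap '' E)) V) (i₂ : Hom R V),
      IsPushout (C := TermGraph Sig arity) d ρ i₁ i₂ := by
  rintro ⟨V, i₁, i₂, hpo⟩
  have hmerged : d.toFun (fresh false) = d.toFun (fresh true) := rfl
  exact not_commSq_of_label_ne hmerged (f := .b) (f' := .c) rfl rfl nofun hpo.toCommSq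

end OmegaInjectivityCounterexample

/-- Ω-injectivity of the matching is necessary: there exist an
LRR-rewrite rule and a non-Ω-injective matching `μ` such that the span
`D(U,μ(E)) ← D(L,E) → R` has no pushout in the category of graphs (as in the example
with `L` having two `g`-labeled nodes merged by `μ`, and fresh targets relabeled by
distinct constants `b ≠ c` in `R`). -/
theorem omega_injectivity_necessary :
    ∃ (Ω : Type) (ar : Ω → ℕ) (L R U : TermGraph Ω ar) (E : Set L.Edge)
      (ρ : TermGraph.Hom (L.D E) R) (μ : TermGraph.Hom L U)
      (d : TermGraph.Hom (L.D E) (U.D (μ.edgeMap '' E))),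
      TermGraph.IsLRRRule E ρ ∧
      ¬ TermGraph.OmegaInjective μ ∧
      d.toFun = TermGraph.dmapFun μ E ∧
      ¬ ∃ (V : TermGraph Ω ar) (i₁ : TermGraph.Hom (U.D (μ.edgeMap '' E)) V)
          (i₂ : TermGraph.Hom R V), IsPushout (C := TermGraph Ω ar) d ρ i₁ i₂ := by
  open OmegaInjectivityCounterexample in
  exact ⟨Sig, arity, L, R, U, E, ρ, μ, d, isLRRRule_ρ, not_omegaInjective_μ, rfl,
    not_exists_isPushout⟩
end

section
/- If Γ is a pushout square in the category of graphs obtained from a strongly labeled span via the canonical construction, then the underlying square of node sets N(Γ) is a pushout in Set; conversely, together with the property that every labeled node of the pushout object is an image of a labeled node from one of the two legs, these conditions characterize the constructed pushout (it satisfies the hypotheses of the pushout-recognition theorem). -/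
open CategoryTheory

/-! The nodes of the canonical pushout are, by construction, the quotient of `N₁ ⊕ N₂` by
`φ₁ n₀ ∼ φ₂ n₀`, which is the standard pushout of the node maps in `Type`. A class receives a
label exactly when some representative is labeled, since the label is read off such a
representative. -/

universe u

namespace CategoryTheory.Limits.Types

theorem isPushout_quot_inl_inr {S X₁ X₂ : Type u} (f : S → X₁) (g : S → X₂) :
    IsPushout (C := Type u) (TypeCat.ofHom f) (TypeCat.ofHom g)
      (TypeCat.ofHom fun x =>
        Quot.mk (fun a b => ∃ s, a = Sum.inl (f s) ∧ b = Sum.inr (g s)) (Sum.inl x))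
      (TypeCat.ofHom fun x =>
        Quot.mk (fun a b => ∃ s, a = Sum.inl (f s) ∧ b = Sum.inr (g s)) (Sum.inr x)) := by
  have hRel : (fun a b => ∃ s, a = Sum.inl (f s) ∧ b = Sum.inr (g s)) =
      Pushout.Rel (TypeCat.ofHom f) (TypeCat.ofHom g) := by
    ext a b
    constructor
    · rintro ⟨s, rfl, rfl⟩
      exact .inl_inr s
    · rintro ⟨s⟩
      exact ⟨s, rfl, rfl⟩
  rw [hRel]
  exact IsPushout.of_isColimit (Pushout.isColimitCocone _ _)

end CategoryTheory.Limits.Types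

namespace OGraph

theorem pushoutGraph_label_isSome_iff {Ω : Type} {ar : Ω → ℕ} {G₀ G₁ G₂ : OGraph Ω ar}
    (φ₁ : Hom G₀ G₁) (φ₂ : Hom G₀ G₂) (c : (pushoutGraph φ₁ φ₂).N) :
    ((pushoutGraph φ₁ φ₂).label c).isSome ↔
      ∃ x, (nodeLabel G₁ G₂ x).isSome ∧ Quot.mk (spanRel φ₁ φ₂) x = c := by
  classical
  simp only [pushoutGraph]
  split_ifs with h
  · exact ⟨fun _ => h.imp fun _ => And.symm, fun _ => h.choose_spec.2⟩
  · simpa [and_comm] using h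

end OGraph

theorem canonical_pushout_satisfies_recognition_general {Ω : Type} {ar : Ω → ℕ}
    {G₀ G₁ G₂ : OGraph Ω ar} (φ₁ : OGraph.Hom G₀ G₁) (φ₂ : OGraph.Hom G₀ G₂) :
    IsPushout (C := Type) (TypeCat.ofHom φ₁.toFun) (TypeCat.ofHom φ₂.toFun)
      (TypeCat.ofHom (fun n => Quot.mk (OGraph.spanRel φ₁ φ₂) (Sum.inl n) :
        G₁.N → (OGraph.pushoutGraph φ₁ φ₂).N))
      (TypeCat.ofHom (fun n => Quot.mk (OGraph.spanRel φ₁ φ₂) (Sum.inr n))) ∧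
    ∀ c : (OGraph.pushoutGraph φ₁ φ₂).N, ((OGraph.pushoutGraph φ₁ φ₂).label c).isSome →
      ∃ x : G₁.N ⊕ G₂.N, (OGraph.nodeLabel G₁ G₂ x).isSome ∧
        Quot.mk (OGraph.spanRel φ₁ φ₂) x = c :=
  ⟨Limits.Types.isPushout_quot_inl_inr φ₁.toFun φ₂.toFun,
    fun c => (OGraph.pushoutGraph_label_isSome_iff φ₁ φ₂ c).mp⟩

/-- The canonical pushout of a strongly labeled span satisfies the
hypotheses of the recognition theorem: its node-set square is a pushout in `Set`
(i.e. in `Type`), and every labeled node of the apex is the image of a labeled node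
of `G₁` or `G₂`. -/
theorem canonical_pushout_satisfies_recognition {Ω : Type} {ar : Ω → ℕ}
    {G₀ G₁ G₂ : OGraph Ω ar} (φ₁ : OGraph.Hom G₀ G₁) (φ₂ : OGraph.Hom G₀ G₂)
    (hSL : OGraph.StronglyLabeled φ₁ φ₂) :
    IsPushout (C := Type) (TypeCat.ofHom φ₁.toFun) (TypeCat.ofHom φ₂.toFun)
      (TypeCat.ofHom (fun n => Quot.mk (OGraph.spanRel φ₁ φ₂) (Sum.inl n) :
        G₁.N → (OGraph.pushoutGraph φ₁ φ₂).N))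
      (TypeCat.ofHom (fun n => Quot.mk (OGraph.spanRel φ₁ φ₂) (Sum.inr n))) ∧
    ∀ c : (OGraph.pushoutGraph φ₁ φ₂).N, ((OGraph.pushoutGraph φ₁ φ₂).label c).isSome →
      ∃ x : G₁.N ⊕ G₂.N, (OGraph.nodeLabel G₁ G₂ x).isSome ∧
        Quot.mk (OGraph.spanRel φ₁ φ₂) x = c :=
  canonical_pushout_satisfies_recognition_general φ₁ φ₂
end
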